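/- arXiv:1012.2757 — 5 statements merged into one kernel-verified Lean document; each statement's English description precedes it below -/
import Mathlib

section
/- Let (X,E,ℓ) be a strongly connected labelled directed graph over a finite alphabet Σ, equipped with transition probabilities p(e) ≥ α > 0 (e ∈ E) whose row sums satisfy Σ_{e:e⁻=x} p(e) ≤ 1 for all x, and let F ⊆ Σ⁺ be a finite, non-empty set that is relatively dense in (X,E,ℓ). Then there exist k ∈ ℕ and ε₀ > 0 such that Σ_{y∈X} p_F^{(k)}(x,y) ≤ 1 − ε₀ for every x ∈ X; that is, the matrix Q = (p_F^{(k)}(x,y))_{x,y∈X} is strictly substochastic with all row sums bounded by 1 − ε₀. -/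
open scoped ENNReal

namespace PaperFormal

variable {X A : Type*}

/-- A list of edges forms a path from `x` to `y` in the labelled graph with edge set `E`. -/
def IsPath (E : Set (X × A × X)) : X → X → List (X × A × X) → Prop
  | x, y, [] => x = y
  | x, y, e :: es => e ∈ E ∧ e.1 = x ∧ IsPath E e.2.2 y es

/-- The label word read along a path. -/
def label (es : List (X × A × X)) : List A := es.map fun e => e.2.1

/-- The language `L_{x,y}` of labels of all paths from `x` to `y`. -/
def Lang (E : Set (X × A × X)) (x y : X) : Set (List A) :=
  {w | ∃ es, IsPath E x y es ∧ label es = w}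

/-- `w` contains no factor (contiguous subword) belonging to `F`. -/
def Avoids (F : Set (List A)) (w : List A) : Prop := ∀ v ∈ F, ¬ v <:+: w

/-- The restricted language `L^F_{x,y}` obtained by forbidding the factors from `F`. -/
def LangF (E : Set (X × A × X)) (F : Set (List A)) (x y : X) : Set (List A) :=
  {w | w ∈ Lang E x y ∧ Avoids F w}

/-- Logarithm with the convention `log r = -∞` for `r ≤ 0`. -/
noncomputable def elog (r : ℝ) : EReal := if r ≤ 0 then ⊥ else ((Real.log r : ℝ) : EReal)

/-- The entropy (exponential growth rate) of a language, with values in `[-∞, ∞)`. -/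
noncomputable def entropy (L : Set (List A)) : EReal :=
  Filter.atTop.limsup fun n : ℕ =>
    (((n : ℝ)⁻¹ : ℝ) : EReal) * elog ((Set.ncard {w ∈ L | w.length = n} : ℕ) : ℝ)

/-- For all `x, y` there is a path from `x` to `y`. -/
def StronglyConnected (E : Set (X × A × X)) : Prop :=
  ∀ x y : X, ∃ es, IsPath E x y es

/-- Strongly connected, and every edge can be "reversed" by a path of length at most `K`. -/
def UniformlyConnectedWith (E : Set (X × A × X)) (K : ℕ) : Prop :=
  StronglyConnected E ∧ ∀ e ∈ E, ∃ es, IsPath E e.2.2 e.1 es ∧ es.length ≤ K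

def UniformlyConnected (E : Set (X × A × X)) : Prop :=
  ∃ K : ℕ, UniformlyConnectedWith E K

/-- For every vertex and label there is at most one outgoing edge with that label. -/
def Deterministic (E : Set (X × A × X)) : Prop :=
  ∀ x a y y', (x, a, y) ∈ E → (x, a, y') ∈ E → y = y'

/-- For every vertex and label there is exactly one outgoing edge with that label. -/
def FullyDeterministic (E : Set (X × A × X)) : Prop :=
  ∀ x a, ∃! y, (x, a, y) ∈ E

/-- `F` is relatively dense in the labelled graph: within uniformly bounded forward
distance of any vertex, some word of `F` can be read along a path. -/
def RelativelyDense (E : Set (X × A × X)) (F : Set (List A)) : Prop :=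
  ∃ D : ℕ, ∀ x : X, ∃ y : X, ∃ w ∈ F,
    (∃ es, IsPath E x y es ∧ es.length ≤ D) ∧ ∃ z es, IsPath E y z es ∧ label es = w

/-- The probability `ℙ(π)` of a path. -/
noncomputable def pathProb (p : X × A × X → ℝ≥0∞) (es : List (X × A × X)) : ℝ≥0∞ :=
  (es.map p).prod

/-- The restricted `n`-step transition probabilities `p_F^{(n)}(x,y)`: total probability
of the paths of length `n` from `x` to `y` whose label contains no factor in `F`. -/
noncomputable def pF (E : Set (X × A × X)) (p : X × A × X → ℝ≥0∞) (F : Set (List A))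
    (n : ℕ) (x y : X) : ℝ≥0∞ :=
  ∑' π : {es : List (X × A × X) // es.length = n ∧ IsPath E x y es ∧ Avoids F (label es)},
    pathProb p π.1

/-- `ρ_{x,y}(P_F) = limsup_n p_F^{(n)}(x,y)^{1/n}`. -/
noncomputable def rhoF (E : Set (X × A × X)) (p : X × A × X → ℝ≥0∞) (F : Set (List A))
    (x y : X) : ℝ≥0∞ :=
  Filter.atTop.limsup fun n : ℕ => pF E p F n x y ^ ((n : ℝ)⁻¹)

/-- The one-step transition kernel `p(x,y) = Σ_{a : (x,a,y) ∈ E} p(x,a,y)`. -/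
noncomputable def step (p : X × A × X → ℝ≥0∞) (x y : X) : ℝ≥0∞ := ∑' a : A, p (x, a, y)

/-- `n`-th matrix power of a nonnegative kernel, sums taken in `[0,∞]`. -/
noncomputable def kpow (P : X → X → ℝ≥0∞) : ℕ → X → X → ℝ≥0∞
  | 0, x, y => by classical exact if x = y then 1 else 0
  | n + 1, x, y => ∑' z, kpow P n x z * P z y

/-- `ρ(P)` computed at the pair `(x,y)`: `limsup_n p^{(n)}(x,y)^{1/n}`. -/
noncomputable def specRad (P : X → X → ℝ≥0∞) (x y : X) : ℝ≥0∞ :=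
  Filter.atTop.limsup fun n : ℕ => kpow P n x y ^ ((n : ℝ)⁻¹)

/-- Transition probabilities adapted to the labelled graph `(X,E,ℓ)`:
`p(e) ≥ α > 0` for edges, `p = 0` off the edge set, and row sums at most `1`. -/
structure IsTransProb (E : Set (X × A × X)) (p : X × A × X → ℝ≥0∞) (α : ℝ) : Prop where
  alpha_pos : 0 < α
  eq_zero_of_not_mem : ∀ e, e ∉ E → p e = 0
  le_of_mem : ∀ e ∈ E, ENNReal.ofReal α ≤ p e
  rowsum_le_one : ∀ x : X, (∑' (a : A) (y : X), p (x, a, y)) ≤ 1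

end PaperFormal

open PaperFormal

namespace Stmt2Aux

variable {X A : Type*}

theorem isPath_append {E : Set (X × A × X)} :
    ∀ {es : List (X × A × X)} {x y z : X} {es' : List (X × A × X)},
    IsPath E x y es → IsPath E y z es' → IsPath E x z (es ++ es')
  | [], x, y, z, es', hxy, hyz => by
      cases hxy; simpa using hyz
  | e :: t, x, y, z, es', hxy, hyz =>
      ⟨hxy.1, hxy.2.1, isPath_append hxy.2.2 hyz⟩

theorem endpoint_unique {E : Set (X × A × X)} :
    ∀ {es : List (X × A × X)} {x y y' : X},
    IsPath E x y es → IsPath E x y' es → y = y'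
  | [], x, y, y', h, h' => h.symm.trans h'
  | e :: t, x, y, y', h, h' => endpoint_unique h.2.2 h'.2.2

theorem prob_lower {E : Set (X × A × X)} {p : X × A × X → ℝ≥0∞} {α : ℝ}
    (hp : IsTransProb E p α) :
    ∀ {es : List (X × A × X)} {x y : X}, IsPath E x y es →
      ENNReal.ofReal α ^ es.length ≤ pathProb p es
  | [], x, y, h => by simp [pathProb]
  | e :: t, x, y, h => by
      simp only [pathProb, List.map_cons, List.prod_cons, List.length_cons, pow_succ']
      exact mul_le_mul' (hp.le_of_mem e h.1) (prob_lower hp h.2.2)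

theorem exists_out_edge [Infinite X] {E : Set (X × A × X)}
    (hSC : StronglyConnected E) (x : X) : ∃ e ∈ E, e.1 = x := by
  obtain ⟨z, hz⟩ := exists_ne x
  obtain ⟨es, hes⟩ := hSC x z
  cases es with
  | nil => exact absurd hes.symm hz
  | cons e t => exact ⟨e, hes.1, hes.2.1⟩

theorem extend_path [Infinite X] {E : Set (X × A × X)} (hSC : StronglyConnected E) :
    ∀ (j : ℕ) {x y : X} {es : List (X × A × X)}, IsPath E x y es →
      ∃ (es' : List (X × A × X)) (y' : X),
        IsPath E x y' (es ++ es') ∧ es'.length = j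
  | 0, x, y, es, h => ⟨[], y, by simpa using h, rfl⟩
  | j + 1, x, y, es, h => by
      obtain ⟨e, heE, he1⟩ := exists_out_edge hSC y
      have h1 : IsPath E x e.2.2 (es ++ [e]) :=
        isPath_append h ⟨heE, he1, rfl⟩
      obtain ⟨es'', y', h2, hlen⟩ := extend_path hSC j h1
      exact ⟨[e] ++ es'', y', by simpa [List.append_assoc] using h2, by simp [hlen]⟩

/-- Sum of outgoing edge probabilities at `x` is at most `1`. -/
theorem sum_edges_le {E : Set (X × A × X)} {p : X × A × X → ℝ≥0∞} {α : ℝ}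
    (hp : IsTransProb E p α) (x : X) :
    ∑' e : {e : X × A × X // e ∈ E ∧ e.1 = x}, p e.1 ≤ 1 := by
  set f : {e : X × A × X // e ∈ E ∧ e.1 = x} → A × X := fun e => (e.1.2.1, e.1.2.2) with hf
  have hinj : Function.Injective f := by
    rintro ⟨⟨x1, a1, y1⟩, h1, rfl⟩ ⟨⟨x2, a2, y2⟩, h2, h2'⟩ h
    simp only [hf, Prod.mk.injEq] at h h2'
    simp [Prod.ext_iff, h.1, h.2, h2']
  have key : ∀ e : {e : X × A × X // e ∈ E ∧ e.1 = x},
      p e.1 = (fun az : A × X => p (x, az.1, az.2)) (f e) := by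
    rintro ⟨⟨x1, a1, y1⟩, h1, rfl⟩; rfl
  calc ∑' e : {e : X × A × X // e ∈ E ∧ e.1 = x}, p e.1
      = ∑' e, (fun az : A × X => p (x, az.1, az.2)) (f e) := tsum_congr key
    _ ≤ ∑' az : A × X, p (x, az.1, az.2) :=
        ENNReal.tsum_comp_le_tsum_of_injective hinj _
    _ = ∑' (a : A) (y : X), p (x, a, y) := ENNReal.tsum_prod (f := fun a y => p (x, a, y))
    _ ≤ 1 := hp.rowsum_le_one x

/-- Total mass of all paths of length `n` starting at `x`. -/
noncomputable def tmass (E : Set (X × A × X)) (p : X × A × X → ℝ≥0∞) (n : ℕ) (x : X) :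
    ℝ≥0∞ :=
  ∑' es : {es : List (X × A × X) // es.length = n ∧ ∃ y, IsPath E x y es},
    pathProb p es.1

def splitFn (E : Set (X × A × X)) (n : ℕ) (x : X) :
    {es : List (X × A × X) // es.length = n + 1 ∧ ∃ y, IsPath E x y es} →
    Σ e : {e : X × A × X // e ∈ E ∧ e.1 = x},
      {es : List (X × A × X) // es.length = n ∧ ∃ y, IsPath E e.1.2.2 y es} :=
  fun s =>
  match s with
  | ⟨[], h⟩ => absurd h.1 (by simp)
  | ⟨e :: t, h⟩ =>
      ⟨⟨e, h.2.choose_spec.1, h.2.choose_spec.2.1⟩,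
       ⟨t, by simpa using h.1, h.2.choose, h.2.choose_spec.2.2⟩⟩

theorem splitFn_spec (E : Set (X × A × X)) (n : ℕ) (x : X) :
    ∀ s, ((splitFn E n x s).1.1 :: (splitFn E n x s).2.1) = s.1 := by
  rintro ⟨es, h⟩
  cases es with
  | nil => exact absurd h.1 (by simp)
  | cons e t => rfl

theorem tmass_le_one [Infinite X] {E : Set (X × A × X)} {p : X × A × X → ℝ≥0∞} {α : ℝ}
    (hp : IsTransProb E p α) : ∀ (n : ℕ) (x : X), tmass E p n x ≤ 1
  | 0, x => by
    have h1 : ∀ es : {es : List (X × A × X) // es.length = 0 ∧ ∃ y, IsPath E x y es},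
        pathProb p es.1 = 1 := by
      rintro ⟨es, h, -⟩
      rw [List.length_eq_zero_iff] at h
      simp [h, pathProb]
    rw [tmass, tsum_congr h1]
    have hsub : Subsingleton {es : List (X × A × X) // es.length = 0 ∧ ∃ y, IsPath E x y es} := by
      constructor
      rintro ⟨es, h, -⟩ ⟨es', h', -⟩
      rw [List.length_eq_zero_iff] at h h'
      simp [h, h']
    have hinj : Function.Injective
        (fun _ : {es : List (X × A × X) // es.length = 0 ∧ ∃ y, IsPath E x y es} => (PUnit.unit : PUnit.{1})) :=
      fun a b _ => Subsingleton.elim a b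
    calc (∑' _ : {es : List (X × A × X) // es.length = 0 ∧ ∃ y, IsPath E x y es}, (1 : ℝ≥0∞))
        ≤ ∑' _ : PUnit.{1}, (1 : ℝ≥0∞) := ENNReal.tsum_comp_le_tsum_of_injective hinj (fun _ => 1)
      _ = 1 := tsum_eq_single (PUnit.unit : PUnit.{1})
        (fun b hb => absurd (Subsingleton.elim b (PUnit.unit : PUnit.{1})) hb)
  | n + 1, x => by
    have hinj : Function.Injective (splitFn E n x) := by
      intro a b hab
      apply Subtype.ext
      rw [← splitFn_spec E n x a, ← splitFn_spec E n x b, hab]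
    have key : ∀ s, pathProb p s.1 =
        (fun t : Σ e : {e : X × A × X // e ∈ E ∧ e.1 = x},
            {es : List (X × A × X) // es.length = n ∧ ∃ y, IsPath E e.1.2.2 y es} =>
          p t.1.1 * pathProb p t.2.1) (splitFn E n x s) := by
      rintro ⟨es, h⟩
      cases es with
      | nil => exact absurd h.1 (by simp)
      | cons e t =>
          show pathProb p (e :: t) = p e * pathProb p t
          simp [pathProb]
    calc tmass E p (n + 1) x
        = ∑' s, (fun t : Σ e : {e : X × A × X // e ∈ E ∧ e.1 = x},
            {es : List (X × A × X) // es.length = n ∧ ∃ y, IsPath E e.1.2.2 y es} =>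
          p t.1.1 * pathProb p t.2.1) (splitFn E n x s) := tsum_congr key
      _ ≤ ∑' t : Σ e : {e : X × A × X // e ∈ E ∧ e.1 = x},
            {es : List (X × A × X) // es.length = n ∧ ∃ y, IsPath E e.1.2.2 y es},
          p t.1.1 * pathProb p t.2.1 := ENNReal.tsum_comp_le_tsum_of_injective hinj _
      _ = ∑' e : {e : X × A × X // e ∈ E ∧ e.1 = x}, ∑' es : {es : List (X × A × X) //
            es.length = n ∧ ∃ y, IsPath E e.1.2.2 y es}, p e.1 * pathProb p es.1 :=
          ENNReal.tsum_sigma' _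
      _ = ∑' e : {e : X × A × X // e ∈ E ∧ e.1 = x}, p e.1 * tmass E p n e.1.2.2 := by
          exact tsum_congr fun e => ENNReal.tsum_mul_left
      _ ≤ ∑' e : {e : X × A × X // e ∈ E ∧ e.1 = x}, p e.1 * 1 :=
          ENNReal.tsum_le_tsum fun e => mul_le_mul_right (tmass_le_one hp n e.1.2.2) _
      _ ≤ 1 := by simpa using sum_edges_le hp x

end Stmt2Aux

/-- For a strongly connected labelled graph with transition probabilities
`p(e) ≥ α > 0` and row sums `≤ 1`, and a finite nonempty relatively dense set `F`, there
are `k ∈ ℕ` and `ε₀ > 0` such that all row sums of `Q = (p_F^{(k)}(x,y))` are `≤ 1 - ε₀`. -/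
theorem statement2 {X A : Type*} [Infinite X] [Fintype A]
    (E : Set (X × A × X)) (hSC : StronglyConnected E)
    (p : X × A × X → ℝ≥0∞) (α : ℝ) (hp : IsTransProb E p α)
    (F : Set (List A)) (hFfin : F.Finite) (hFne : F.Nonempty)
    (hFeps : ∀ v ∈ F, v ≠ ([] : List A))
    (hFdense : RelativelyDense E F) :
    ∃ (k : ℕ) (ε₀ : ℝ), 0 < ε₀ ∧
      ∀ x : X, (∑' y : X, pF E p F k x y) ≤ ENNReal.ofReal (1 - ε₀) := by
  classical
  obtain ⟨D, hD⟩ := hFdense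
  set M : ℕ := hFfin.toFinset.sup List.length with hM
  set k : ℕ := D + M with hk
  refine ⟨k, α ^ k, pow_pos hp.alpha_pos _, ?_⟩
  intro x
  -- the witness path of length `k` starting at `x` whose label contains a factor of `F`
  obtain ⟨y, w, hwF, ⟨es₁, hes₁, hlen₁⟩, z, es₂, hes₂, hlab₂⟩ := hD x
  have hlen₂ : es₂.length = w.length := by rw [← hlab₂]; simp [label]
  have hwM : w.length ≤ M := Finset.le_sup (hFfin.mem_toFinset.mpr hwF)
  have hπ₀ : IsPath E x z (es₁ ++ es₂) := Stmt2Aux.isPath_append hes₁ hes₂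
  have hlen₀ : (es₁ ++ es₂).length ≤ k := by
    rw [List.length_append, hlen₂, hk]; omega
  obtain ⟨es₃, y', hπw, hlen₃⟩ :=
    Stmt2Aux.extend_path hSC (k - (es₁ ++ es₂).length) hπ₀
  set πw : List (X × A × X) := (es₁ ++ es₂) ++ es₃ with hπwdef
  have hlenw : πw.length = k := by
    rw [hπwdef, List.length_append, hlen₃]; omega
  have hnotav : ¬ Avoids F (label πw) := by
    intro hA
    refine hA w hwF ⟨label es₁, label es₃, ?_⟩
    rw [hπwdef]
    simp only [label, List.map_append, ← hlab₂]
  have hprob : ENNReal.ofReal (α ^ k) ≤ pathProb p πw := by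
    rw [ENNReal.ofReal_pow hp.alpha_pos.le, ← hlenw]
    exact Stmt2Aux.prob_lower hp hπw
  -- split the total mass into avoiding and non-avoiding paths
  set s : Set {es : List (X × A × X) // es.length = k ∧ ∃ yy, IsPath E x yy es} :=
    {t | Avoids F (label t.1)} with hs
  have hS : (∑' y : X, pF E p F k x y) =
      ∑' σ : Σ yy : X, {es : List (X × A × X) //
          es.length = k ∧ IsPath E x yy es ∧ Avoids F (label es)},
        pathProb p σ.2.1 := by
    unfold pF
    exact (ENNReal.tsum_sigma' (f := fun σ : Σ yy : X, {es : List (X × A × X) //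
      es.length = k ∧ IsPath E x yy es ∧ Avoids F (label es)} => pathProb p σ.2.1)).symm
  set ι : (Σ yy : X, {es : List (X × A × X) //
      es.length = k ∧ IsPath E x yy es ∧ Avoids F (label es)}) → ↥s :=
    fun σ => ⟨⟨σ.2.1, σ.2.2.1, σ.1, σ.2.2.2.1⟩, σ.2.2.2.2⟩ with hι
  have hιinj : Function.Injective ι := by
    rintro ⟨ya, la, hla⟩ ⟨yb, lb, hlb⟩ hab
    have hl : la = lb := congrArg (fun t : ↥s => t.1.1) hab
    subst hl
    have hy : ya = yb := Stmt2Aux.endpoint_unique hla.2.1 hlb.2.1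
    subst hy
    exact congrArg (Sigma.mk ya) (Subtype.ext rfl)
  have hS' : (∑' y : X, pF E p F k x y) ≤ ∑' t : ↥s, pathProb p t.1.1 := by
    rw [hS]
    exact ENNReal.tsum_comp_le_tsum_of_injective hιinj (fun t : ↥s => pathProb p t.1.1)
  have hel : (⟨πw, hlenw, y', hπw⟩ : {es : List (X × A × X) //
      es.length = k ∧ ∃ yy, IsPath E x yy es}) ∈ sᶜ := hnotav
  have hc : ENNReal.ofReal (α ^ k) ≤ ∑' t : ↥sᶜ, pathProb p t.1.1 :=
    hprob.trans (ENNReal.le_tsum (⟨_, hel⟩ : ↥sᶜ))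
  have hfull : (∑' t : ↥s, pathProb p t.1.1) + (∑' t : ↥sᶜ, pathProb p t.1.1) =
      Stmt2Aux.tmass E p k x := by
    unfold Stmt2Aux.tmass
    exact Summable.tsum_add_tsum_compl (s := s) (f := fun t : {es : List (X × A × X) // es.length = k ∧ ∃ yy, IsPath E x yy es} => pathProb p t.1) ENNReal.summable ENNReal.summable
  have hsum : (∑' y : X, pF E p F k x y) + ENNReal.ofReal (α ^ k) ≤ 1 := by
    calc (∑' y : X, pF E p F k x y) + ENNReal.ofReal (α ^ k)
        ≤ (∑' t : ↥s, pathProb p t.1.1) + (∑' t : ↥sᶜ, pathProb p t.1.1) :=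
          add_le_add hS' hc
      _ = Stmt2Aux.tmass E p k x := hfull
      _ ≤ 1 := Stmt2Aux.tmass_le_one hp k x
  have hofr : ENNReal.ofReal (1 - α ^ k) = 1 - ENNReal.ofReal (α ^ k) := by
    rw [ENNReal.ofReal_sub _ (pow_nonneg hp.alpha_pos.le k), ENNReal.ofReal_one]
  rw [hofr]
  exact ENNReal.le_sub_of_add_le_right ENNReal.ofReal_ne_top hsum
end

section
/- Let (X,E,ℓ) be a uniformly connected labelled directed graph over a finite alphabet Σ, equipped with transition probabilities p(e) ≥ α > 0 (e ∈ E) whose row sums satisfy Σ_{e:e⁻=x} p(e) ≤ 1 for all x, and let F ⊆ Σ⁺ be a finite, non-empty set that is relatively dense in (X,E,ℓ). Then sup_{x,y∈X} ρ_{x,y}(P_F) < ρ(P) strictly. -/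
open scoped ENNReal

open PaperFormal

namespace S3
open Filter
open scoped Classical

variable {X A : Type*}

/-- End vertex of a list of edges started at `x`. -/
def endV (x : X) (es : List (X × A × X)) : X := es.foldl (fun _ e => e.2.2) x

@[simp] lemma endV_nil (x : X) : endV x ([] : List (X × A × X)) = x := rfl

@[simp] lemma endV_cons (x : X) (e : X × A × X) (es : List (X × A × X)) :
    endV x (e :: es) = endV e.2.2 es := rfl

lemma endV_append (x : X) (a b : List (X × A × X)) :
    endV x (a ++ b) = endV (endV x a) b := by
  induction a generalizing x with
  | nil => rfl
  | cons e t ih => simp [ih]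

section PathLemmas
variable {E : Set (X × A × X)} {x y z : X} {es a b : List (X × A × X)}

lemma isPath_endV_eq (h : IsPath E x y es) : endV x es = y := by
  induction es generalizing x with
  | nil => exact h
  | cons e t ih => exact ih h.2.2

lemma isPath_append (h1 : IsPath E x z a) (h2 : IsPath E z y b) : IsPath E x y (a ++ b) := by
  induction a generalizing x with
  | nil => cases h1; exact h2
  | cons e t ih => exact ⟨h1.1, h1.2.1, ih h1.2.2⟩

lemma isPath_split (h : IsPath E x y (a ++ b)) :
    IsPath E x (endV x a) a ∧ IsPath E (endV x a) y b := by
  induction a generalizing x with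
  | nil => exact ⟨rfl, h⟩
  | cons e t ih =>
    obtain ⟨h1, h2, h3⟩ := h
    obtain ⟨ih1, ih2⟩ := ih h3
    exact ⟨⟨h1, h2, ih1⟩, by simpa using ih2⟩

lemma isPath_take_drop (h : IsPath E x y es) (k : ℕ) :
    IsPath E x (endV x (es.take k)) (es.take k) ∧
      IsPath E (endV x (es.take k)) y (es.drop k) := by
  have := h
  rw [← List.take_append_drop k es] at this
  exact isPath_split this

lemma isPath_mono {E' : Set (X × A × X)} (hEE : E ⊆ E') (h : IsPath E x y es) :
    IsPath E' x y es := by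
  induction es generalizing x with
  | nil => exact h
  | cons e t ih => exact ⟨hEE h.1, h.2.1, ih h.2.2⟩

lemma isPath_edges_mem (h : IsPath E x y es) : ∀ e ∈ es, e ∈ E := by
  induction es generalizing x with
  | nil => simp
  | cons e t ih =>
    intro f hf
    rcases List.mem_cons.1 hf with rfl | hf
    · exact h.1
    · exact ih h.2.2 f hf

lemma isPath_join_replicate (h : IsPath E x x es) (j : ℕ) :
    IsPath E x x (List.flatten (List.replicate j es)) := by
  induction j with
  | zero => rfl
  | succ n ih => exact isPath_append h (by simpa using ih)

end PathLemmas

section LabelLemmas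
variable {F : Set (List A)} {w : List A}

lemma label_append (a b : List (X × A × X)) : label (a ++ b) = label a ++ label b :=
  List.map_append

@[simp] lemma label_length (a : List (X × A × X)) : (label a).length = a.length :=
  List.length_map _

lemma label_infix {a b : List (X × A × X)} (h : a <:+: b) : label a <:+: label b :=
  h.map _

lemma avoids_of_infix {u v : List A} (h : Avoids F v) (huv : u <:+: v) : Avoids F u :=
  fun w hw hwu => h w hw (hwu.trans huv)

end LabelLemmas

section ProbLemmas
variable {E : Set (X × A × X)} {p : X × A × X → ℝ≥0∞} {α : ℝ} {x y : X}

lemma pathProb_nil (p : X × A × X → ℝ≥0∞) : pathProb p ([] : List (X × A × X)) = 1 := rfl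

lemma pathProb_cons (p : X × A × X → ℝ≥0∞) (e : X × A × X) (es : List (X × A × X)) :
    pathProb p (e :: es) = p e * pathProb p es := by
  simp [pathProb]

lemma pathProb_append (p : X × A × X → ℝ≥0∞) (a b : List (X × A × X)) :
    pathProb p (a ++ b) = pathProb p a * pathProb p b := by
  simp [pathProb]

lemma transProb_p_le_one (hp : IsTransProb E p α) (e : X × A × X) : p e ≤ 1 := by
  rcases e with ⟨x, a, y⟩
  calc p (x, a, y) ≤ ∑' y' : X, p (x, a, y') := ENNReal.le_tsum _
    _ ≤ ∑' (a' : A) (y' : X), p (x, a', y') := ENNReal.le_tsum _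
    _ ≤ 1 := hp.rowsum_le_one x

lemma transProb_pathProb_le_one (hp : IsTransProb E p α) (es : List (X × A × X)) :
    pathProb p es ≤ 1 := by
  induction es with
  | nil => simp [pathProb_nil]
  | cons e t ih =>
    rw [pathProb_cons]
    exact mul_le_one' (transProb_p_le_one hp e) ih

lemma transProb_pathProb_ge (hp : IsTransProb E p α) {es : List (X × A × X)}
    (h : ∀ e ∈ es, e ∈ E) : ENNReal.ofReal α ^ es.length ≤ pathProb p es := by
  induction es with
  | nil => simp [pathProb_nil]
  | cons e t ih =>
    rw [pathProb_cons, List.length_cons, pow_succ, mul_comm (ENNReal.ofReal α ^ t.length)]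
    exact mul_le_mul' (hp.le_of_mem e (h e (by simp))) (ih fun f hf => h f (by simp [hf]))

end ProbLemmas

section KpowLemmas
variable {p : X × A × X → ℝ≥0∞} {E : Set (X × A × X)} {α : ℝ}

lemma kpow_zero (P : X → X → ℝ≥0∞) (x y : X) :
    kpow P 0 x y = if x = y then 1 else 0 := by
  simp [kpow]

lemma kpow_succ (P : X → X → ℝ≥0∞) (n : ℕ) (x y : X) :
    kpow P (n + 1) x y = ∑' z, kpow P n x z * P z y := rfl

lemma kpow_succ_left (P : X → X → ℝ≥0∞) (n : ℕ) (x y : X) :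
    kpow P (n + 1) x y = ∑' z, P x z * kpow P n z y := by
  induction n generalizing x y with
  | zero =>
    rw [kpow_succ]
    rw [tsum_eq_single x (by intro z hz; rw [kpow_zero, if_neg (Ne.symm hz), zero_mul])]
    rw [tsum_eq_single y (by intro z hz; rw [kpow_zero, if_neg hz, mul_zero])]
    rw [kpow_zero, kpow_zero, if_pos rfl, if_pos rfl, one_mul, mul_one]
  | succ n ih =>
    rw [kpow_succ]
    calc ∑' z, kpow P (n+1) x z * P z y
        = ∑' z, (∑' w, P x w * kpow P n w z) * P z y := by
          congr 1; ext z; rw [ih]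
      _ = ∑' z, ∑' w, P x w * kpow P n w z * P z y := by
          congr 1; ext z; rw [ENNReal.tsum_mul_right]
      _ = ∑' w, ∑' z, P x w * kpow P n w z * P z y := ENNReal.tsum_comm
      _ = ∑' w, P x w * ∑' z, kpow P n w z * P z y := by
          congr 1; ext w
          rw [← ENNReal.tsum_mul_left]
          congr 1; ext z; ring
      _ = ∑' w, P x w * kpow P (n+1) w y := by rfl

lemma kpow_add (P : X → X → ℝ≥0∞) (m n : ℕ) (x y : X) :
    kpow P (m + n) x y = ∑' z, kpow P m x z * kpow P n z y := by
  induction n generalizing y with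
  | zero =>
    rw [Nat.add_zero]
    rw [tsum_eq_single y (by intro z hz; rw [kpow_zero, if_neg hz, mul_zero])]
    rw [kpow_zero, if_pos rfl, mul_one]
  | succ n ih =>
    rw [← Nat.add_assoc, kpow_succ]
    calc ∑' z, kpow P (m + n) x z * P z y
        = ∑' z, (∑' w, kpow P m x w * kpow P n w z) * P z y := by
          congr 1; ext z; rw [ih]
      _ = ∑' z, ∑' w, kpow P m x w * kpow P n w z * P z y := by
          congr 1; ext z; rw [ENNReal.tsum_mul_right]
      _ = ∑' w, ∑' z, kpow P m x w * kpow P n w z * P z y := ENNReal.tsum_comm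
      _ = ∑' w, kpow P m x w * ∑' z, kpow P n w z * P z y := by
          congr 1; ext w
          rw [← ENNReal.tsum_mul_left]
          congr 1; ext z; ring
      _ = ∑' w, kpow P m x w * kpow P (n+1) w y := rfl

lemma kpow_ge_mul (P : X → X → ℝ≥0∞) (m n : ℕ) (x z y : X) :
    kpow P m x z * kpow P n z y ≤ kpow P (m + n) x y := by
  rw [kpow_add]
  exact ENNReal.le_tsum z

lemma step_rowsum_le_one (hp : IsTransProb E p α) (x : X) :
    (∑' y, step p x y) ≤ 1 := by
  calc (∑' y, step p x y) = ∑' (y : X) (a : A), p (x, a, y) := rfl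
    _ = ∑' (a : A) (y : X), p (x, a, y) := ENNReal.tsum_comm
    _ ≤ 1 := hp.rowsum_le_one x

lemma kpow_rowsum_le_one (hp : IsTransProb E p α) (n : ℕ) (x : X) :
    (∑' y, kpow (step p) n x y) ≤ 1 := by
  induction n generalizing x with
  | zero =>
    rw [tsum_eq_single x (by intro z hz; rw [kpow_zero, if_neg (Ne.symm hz)])]
    rw [kpow_zero, if_pos rfl]
  | succ n ih =>
    calc (∑' y, kpow (step p) (n+1) x y)
        = ∑' y, ∑' z, kpow (step p) n x z * step p z y := rfl
      _ = ∑' z, ∑' y, kpow (step p) n x z * step p z y := ENNReal.tsum_comm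
      _ = ∑' z, kpow (step p) n x z * ∑' y, step p z y := by
          congr 1; ext z; rw [ENNReal.tsum_mul_left]
      _ ≤ ∑' z, kpow (step p) n x z * 1 := by
          exact ENNReal.tsum_le_tsum fun z => mul_le_mul_right (step_rowsum_le_one hp z) _
      _ = ∑' z, kpow (step p) n x z := by simp
      _ ≤ 1 := ih x

lemma kpow_le_one (hp : IsTransProb E p α) (n : ℕ) (x y : X) :
    kpow (step p) n x y ≤ 1 :=
  le_trans (ENNReal.le_tsum y) (kpow_rowsum_le_one hp n x)

end KpowLemmas


section PathSum
variable {p : X × A × X → ℝ≥0∞} {E : Set (X × A × X)} {F : Set (List A)} {α : ℝ}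

/-- Sum of path probabilities over all length-`n` "formal paths" from `x` to `y`. -/
noncomputable def PS (p : X × A × X → ℝ≥0∞) (n : ℕ) (x y : X) : ℝ≥0∞ :=
  ∑' es : {es : List (X × A × X) // es.length = n ∧
      IsPath (Set.univ : Set (X × A × X)) x y es}, pathProb p es.1

lemma PS_zero (x y : X) : PS p 0 x y = if x = y then 1 else 0 := by
  by_cases h : x = y
  · subst h
    rw [if_pos rfl, PS]
    have key : ∀ (b : {es : List (X × A × X) // es.length = 0 ∧
        IsPath (Set.univ : Set (X × A × X)) x x es}), b = ⟨[], rfl, rfl⟩ := by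
      rintro ⟨es, h1, h2⟩
      exact Subtype.ext (List.length_eq_zero_iff.1 h1)
    rw [tsum_eq_single (⟨[], rfl, rfl⟩ : {es : List (X × A × X) // es.length = 0 ∧
        IsPath (Set.univ : Set (X × A × X)) x x es}) (fun b hb => absurd (key b) hb)]
    rfl
  · rw [if_neg h, PS]
    have : IsEmpty {es : List (X × A × X) // es.length = 0 ∧
        IsPath (Set.univ : Set (X × A × X)) x y es} := by
      constructor
      rintro ⟨es, h1, h2⟩
      rw [List.length_eq_zero_iff.1 h1] at h2
      exact h h2
    exact tsum_empty

lemma PS_succ (n : ℕ) (x y : X) :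
    PS p (n + 1) x y = ∑' z : X, step p x z * PS p n z y := by
  classical
  let T : (Σ az : A × X, {es : List (X × A × X) // es.length = n ∧
        IsPath (Set.univ : Set (X × A × X)) az.2 y es}) →
      {es : List (X × A × X) // es.length = n + 1 ∧
        IsPath (Set.univ : Set (X × A × X)) x y es} :=
    fun t => ⟨(x, t.1.1, t.1.2) :: t.2.1,
      by simp [t.2.2.1], Set.mem_univ _, rfl, t.2.2.2⟩
  have hbij : Function.Bijective T := by
    constructor
    · rintro ⟨⟨a, z⟩, ⟨es, he⟩⟩ ⟨⟨a', z'⟩, ⟨es', he'⟩⟩ ht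
      have h2 := congrArg Subtype.val ht
      simp only [T, List.cons.injEq, Prod.mk.injEq] at h2
      obtain ⟨⟨-, h3, h4⟩, h5⟩ := h2
      subst h3; subst h4; subst h5
      rfl
    · rintro ⟨es, hlen, hpath⟩
      cases es with
      | nil => simp at hlen
      | cons e tl =>
        obtain ⟨hE, hx, htl⟩ := hpath
        obtain ⟨x', a, z⟩ := e
        cases hx
        exact ⟨⟨⟨a, z⟩, ⟨tl, by simpa using hlen, htl⟩⟩, rfl⟩
  calc PS p (n + 1) x y
      = ∑' t, pathProb p (T t).1 :=
        ((Equiv.ofBijective T hbij).tsum_eq (fun s => pathProb p s.1)).symm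
    _ = ∑' t : (Σ az : A × X, {es : List (X × A × X) // es.length = n ∧
          IsPath (Set.univ : Set (X × A × X)) az.2 y es}),
          p (x, t.1.1, t.1.2) * pathProb p t.2.1 :=
        tsum_congr fun t => pathProb_cons p _ _
    _ = ∑' az : A × X, ∑' es : {es : List (X × A × X) // es.length = n ∧
          IsPath (Set.univ : Set (X × A × X)) az.2 y es},
          p (x, az.1, az.2) * pathProb p es.1 := ENNReal.tsum_sigma' _
    _ = ∑' az : A × X, p (x, az.1, az.2) * PS p n az.2 y :=
        tsum_congr fun az => by rw [ENNReal.tsum_mul_left]; rfl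
    _ = ∑' a : A, ∑' z : X, p (x, a, z) * PS p n z y := ENNReal.tsum_prod'
    _ = ∑' z : X, ∑' a : A, p (x, a, z) * PS p n z y := ENNReal.tsum_comm
    _ = ∑' z : X, step p x z * PS p n z y :=
        tsum_congr fun z => by rw [ENNReal.tsum_mul_right]; rfl

lemma kpow_eq_PS (n : ℕ) (x y : X) : kpow (step p) n x y = PS p n x y := by
  induction n generalizing x y with
  | zero => rw [kpow_zero, PS_zero]
  | succ n ih =>
    rw [kpow_succ_left, PS_succ]
    exact tsum_congr fun z => by rw [ih]

/-- Total probability mass of a set of edge-lists. -/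
noncomputable def pmass (p : X × A × X → ℝ≥0∞) (s : Set (List (X × A × X))) : ℝ≥0∞ :=
  ∑' es, s.indicator (pathProb p) es

lemma pmass_eq_subtype (s : Set (List (X × A × X))) :
    pmass p s = ∑' es : s, pathProb p es.1 := (tsum_subtype s (pathProb p)).symm

lemma kpow_eq_pmass (n : ℕ) (x y : X) :
    kpow (step p) n x y =
      pmass p {es | es.length = n ∧ IsPath (Set.univ : Set (X × A × X)) x y es} := by
  rw [kpow_eq_PS, pmass_eq_subtype]; rfl

lemma pF_eq_pmass (E : Set (X × A × X)) (F : Set (List A)) (n : ℕ) (x y : X) :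
    pF E p F n x y =
      pmass p {es | es.length = n ∧ IsPath E x y es ∧ Avoids F (label es)} := by
  rw [pmass_eq_subtype]; rfl

lemma kpow_ge_path {x y : X} {es : List (X × A × X)} (hpath : IsPath E x y es) :
    pathProb p es ≤ kpow (step p) es.length x y := by
  rw [kpow_eq_pmass]
  calc pathProb p es
      = Set.indicator {es' : List (X × A × X) | es'.length = es.length ∧
          IsPath (Set.univ : Set (X × A × X)) x y es'} (pathProb p) es := by
        rw [Set.indicator_of_mem (show es ∈ {es' : List (X × A × X) | es'.length = es.length ∧
          IsPath (Set.univ : Set (X × A × X)) x y es'} from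
          ⟨rfl, isPath_mono (Set.subset_univ E) hpath⟩)]
    _ ≤ pmass p _ := ENNReal.le_tsum es

end PathSum


section EncDec
variable {E : Set (X × A × X)} {F : Set (List A)} {p : X × A × X → ℝ≥0∞} {α : ℝ}
variable (st rt : X → List (X × A × X)) (T : ℕ)

/-- Insert, after each block of `T` edges, the canonical detour at the current vertex,
according to the list of booleans. -/
def enc : List Bool → X → List (X × A × X) → List (X × A × X)
  | [], _, es => es
  | b :: bs, x, es =>
      es.take T ++
        ((if b then st (endV x (es.take T)) ++ rt (endV x (es.take T)) else []) ++
          enc bs (endV x (es.take T)) (es.drop T))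

/-- Decoder for `enc`. -/
noncomputable def dec : ℕ → X → List (X × A × X) → List Bool × List (X × A × X)
  | 0, _, es => ([], es)
  | m + 1, x, es =>
      if (es.drop T).take (st (endV x (es.take T))).length = st (endV x (es.take T)) then
        (true :: (dec m (endV x (es.take T)) ((es.drop T).drop
            ((st (endV x (es.take T))).length + (rt (endV x (es.take T))).length))).1,
          es.take T ++ (dec m (endV x (es.take T)) ((es.drop T).drop
            ((st (endV x (es.take T))).length + (rt (endV x (es.take T))).length))).2)
      else
        (false :: (dec m (endV x (es.take T)) (es.drop T)).1,
          es.take T ++ (dec m (endV x (es.take T)) (es.drop T)).2)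

variable {st rt T}

lemma enc_cons (b : Bool) (bs : List Bool) (x : X) (es : List (X × A × X)) :
    enc st rt T (b :: bs) x es =
      es.take T ++
        ((if b then st (endV x (es.take T)) ++ rt (endV x (es.take T)) else []) ++
          enc st rt T bs (endV x (es.take T)) (es.drop T)) := rfl

lemma dec_succ (m : ℕ) (x : X) (es : List (X × A × X)) :
    dec st rt T (m + 1) x es =
      if (es.drop T).take (st (endV x (es.take T))).length = st (endV x (es.take T)) then
        (true :: (dec st rt T m (endV x (es.take T)) ((es.drop T).drop
            ((st (endV x (es.take T))).length + (rt (endV x (es.take T))).length))).1,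
          es.take T ++ (dec st rt T m (endV x (es.take T)) ((es.drop T).drop
            ((st (endV x (es.take T))).length + (rt (endV x (es.take T))).length))).2)
      else
        (false :: (dec st rt T m (endV x (es.take T)) (es.drop T)).1,
          es.take T ++ (dec st rt T m (endV x (es.take T)) (es.drop T)).2) := by
  rw [dec]

lemma enc_isPath (hloop : ∀ v, IsPath E v v (st v ++ rt v))
    {x y : X} {es : List (X × A × X)} (h : IsPath E x y es) :
    ∀ bs : List Bool, IsPath E x y (enc st rt T bs x es) := by
  intro bs
  induction bs generalizing x es with
  | nil => exact h
  | cons b bs ih =>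
    obtain ⟨h1, h2⟩ := isPath_take_drop h T
    rw [enc_cons]
    refine isPath_append h1 (isPath_append ?_ (ih h2))
    cases b
    · exact rfl
    · simpa using hloop (endV x (es.take T))

lemma enc_length_le (hlen : ∀ v, (st v).length + (rt v).length ≤ T)
    (bs : List Bool) (x : X) (es : List (X × A × X)) :
    (enc st rt T bs x es).length ≤ es.length + T * bs.length := by
  induction bs generalizing x es with
  | nil => simp [enc]
  | cons b bs ih =>
    have h1 := ih (endV x (es.take T)) (es.drop T)
    have h2 : (if b then st (endV x (es.take T)) ++ rt (endV x (es.take T))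
        else []).length ≤ T := by
      cases b
      · simp
      · simpa using hlen (endV x (es.take T))
    have h3 : (es.take T).length + (es.drop T).length = es.length := by
      rw [List.length_take, List.length_drop]; omega
    rw [enc_cons]
    simp only [List.length_append, List.length_cons, Nat.mul_succ]
    omega

lemma enc_length_ge (bs : List Bool) (x : X) (es : List (X × A × X)) :
    es.length ≤ (enc st rt T bs x es).length := by
  induction bs generalizing x es with
  | nil => simp [enc]
  | cons b bs ih =>
    have h1 := ih (endV x (es.take T)) (es.drop T)
    have h3 : (es.take T).length + (es.drop T).length = es.length := by
      rw [List.length_take, List.length_drop]; omega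
    rw [enc_cons]
    simp only [List.length_append]
    omega

lemma enc_pathProb {c : ℝ≥0∞} (hc : ∀ v, c ≤ pathProb p (st v ++ rt v))
    (bs : List Bool) (x : X) (es : List (X × A × X)) :
    pathProb p es * c ^ (bs.count true) ≤ pathProb p (enc st rt T bs x es) := by
  induction bs generalizing x es with
  | nil => simp [enc]
  | cons b bs ih =>
    have h1 := ih (endV x (es.take T)) (es.drop T)
    rw [enc_cons]
    simp only [pathProb_append]
    have hsplit : pathProb p es = pathProb p (es.take T) * pathProb p (es.drop T) := by
      rw [← pathProb_append, List.take_append_drop]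
    rw [hsplit]
    have hcount : ((b :: bs).count true : ℕ) = bs.count true + (if b then 1 else 0) := by
      cases b <;> simp [List.count_cons]
    rw [hcount, pow_add]
    have h2 : c ^ (if b then 1 else 0) ≤
        pathProb p (if b then st (endV x (es.take T)) ++ rt (endV x (es.take T)) else []) := by
      cases b
      · simp [pathProb_nil]
      · simpa using hc (endV x (es.take T))
    calc pathProb p (es.take T) * pathProb p (es.drop T) *
          (c ^ bs.count true * c ^ (if b then 1 else 0))
        = pathProb p (es.take T) * (c ^ (if b then 1 else 0) *
            (pathProb p (es.drop T) * c ^ bs.count true)) := by ring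
      _ ≤ pathProb p (es.take T) *
          (pathProb p (if b then st (endV x (es.take T)) ++ rt (endV x (es.take T)) else []) *
            pathProb p (enc st rt T bs (endV x (es.take T)) (es.drop T))) :=
          mul_le_mul_right (mul_le_mul' h2 h1) _

lemma dec_enc (hst_le : ∀ v, (st v).length ≤ T)
    (hrt_le : ∀ v, (st v).length + (rt v).length ≤ T)
    (hstF : ∀ v, ∃ w ∈ F, w <:+: label (st v))
    {yy : X} :
    ∀ (bs : List Bool) (x : X) (es : List (X × A × X)), IsPath E x yy es →
      Avoids F (label es) → T * bs.length + T ≤ es.length →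
      dec st rt T bs.length x (enc st rt T bs x es) = (bs, es) := by
  intro bs
  induction bs with
  | nil => intro x es _ _ _; rfl
  | cons b bs ih =>
    intro x es hpath hAv hlen
    rw [List.length_cons, Nat.mul_succ] at hlen
    set t := es.take T with ht
    set d := es.drop T with hd
    set y := endV x t with hy
    have htlen : t.length = T := by
      rw [ht, List.length_take]; omega
    have hdlen : d.length = es.length - T := by rw [hd, List.length_drop]
    have hTd : T * bs.length + T ≤ d.length := by omega
    have hTd1 : T ≤ d.length := le_trans (Nat.le_add_left T _) hTd
    have htd : t ++ d = es := List.take_append_drop T es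
    obtain ⟨hpt, hpd⟩ := isPath_take_drop hpath T
    rw [← hy] at hpd
    have hAvd : Avoids F (label d) :=
      avoids_of_infix hAv (label_infix (List.drop_suffix T es).isInfix)
    have hENC : enc st rt T (b :: bs) x es =
        t ++ ((if b then st y ++ rt y else []) ++ enc st rt T bs y d) := by
      rw [enc_cons, ← ht, ← hd, ← hy]
    have htake : (enc st rt T (b :: bs) x es).take T = t := by
      rw [hENC, List.take_append_of_le_length (by omega), ← htlen, List.take_length]
    have hdrop : (enc st rt T (b :: bs) x es).drop T =
        (if b then st y ++ rt y else []) ++ enc st rt T bs y d := by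
      rw [hENC, ← htlen, List.drop_left]
    have hRtake : ∀ k, k ≤ T → (enc st rt T bs y d).take k = d.take k := by
      intro k hk
      cases bs with
      | nil => rw [show enc st rt T [] y d = d from rfl]
      | cons b' bs' =>
        rw [enc_cons]
        have hdT : (d.take T).length = T := by
          rw [List.length_take]; omega
        rw [List.take_append_of_le_length (by omega), List.take_take, min_eq_left hk]
    have hrec : dec st rt T bs.length y (enc st rt T bs y d) = (bs, d) :=
      ih y d hpd hAvd hTd
    rw [List.length_cons, dec_succ, htake, ← hy, hdrop]
    cases b with
    | true =>
      simp only [reduceIte]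
      have hcond : ((st y ++ rt y) ++ enc st rt T bs y d).take (st y).length = st y := by
        rw [List.append_assoc, List.take_append_of_le_length le_rfl, List.take_length]
      rw [if_pos hcond]
      have hdd : ((st y ++ rt y) ++ enc st rt T bs y d).drop
          ((st y).length + (rt y).length) = enc st rt T bs y d := by
        rw [← List.length_append, List.drop_left]
      rw [hdd, hrec, htd]
    | false =>
      simp only [if_neg Bool.false_ne_true, List.nil_append]
      have hcond : (enc st rt T bs y d).take (st y).length ≠ st y := by
        rw [hRtake _ (hst_le y)]
        intro hEq
        rcases hstF y with ⟨w, hwF, hw⟩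
        refine hAv w hwF ?_
        have hinf : d.take (st y).length <:+: es := by
          rw [hd]
          exact ((List.take_prefix _ _).isInfix).trans (List.drop_suffix T es).isInfix
        refine hw.trans ?_
        rw [← hEq]
        exact label_infix hinf
      rw [if_neg hcond, hrec, htd]

end EncDec


section Master
variable {E : Set (X × A × X)} {F : Set (List A)} {p : X × A × X → ℝ≥0∞} {α : ℝ}
variable {st rt : X → List (X × A × X)} {T : ℕ} {c : ℝ≥0∞}

lemma tsum_boolList (c : ℝ≥0∞) (m : ℕ) :
    (∑' bs : {l : List Bool // l.length = m}, c ^ (bs.1.count true)) = (1 + c) ^ m := by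
  induction m with
  | zero =>
    have key : ∀ (b : {l : List Bool // l.length = 0}), b = ⟨[], rfl⟩ :=
      fun b => Subtype.ext (List.length_eq_zero_iff.1 b.2)
    rw [tsum_eq_single (⟨[], rfl⟩ : {l : List Bool // l.length = 0})
      (fun b hb => absurd (key b) hb)]
    simp
  | succ m ih =>
    let g : Bool × {l : List Bool // l.length = m} → {l : List Bool // l.length = m + 1} :=
      fun t => ⟨t.1 :: t.2.1, by simp [t.2.2]⟩
    have hbij : Function.Bijective g := by
      constructor
      · rintro ⟨b, l, hl⟩ ⟨b', l', hl'⟩ ht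
        have h2 := congrArg Subtype.val ht
        simp only [g, List.cons.injEq] at h2
        obtain ⟨rfl, h3⟩ := h2
        subst h3
        rfl
      · rintro ⟨l, hl⟩
        cases l with
        | nil => simp at hl
        | cons b tl => exact ⟨⟨b, tl, by simpa using hl⟩, rfl⟩
    calc (∑' bs : {l : List Bool // l.length = m + 1}, c ^ (bs.1.count true))
        = ∑' t : Bool × {l : List Bool // l.length = m}, c ^ ((g t).1.count true) :=
          ((Equiv.ofBijective g hbij).tsum_eq _).symm
      _ = ∑' b : Bool, ∑' l : {l : List Bool // l.length = m},
            c ^ ((b :: l.1).count true) := ENNReal.tsum_prod'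
      _ = (∑' l : {l : List Bool // l.length = m}, c ^ ((false :: l.1).count true))
          + (∑' l : {l : List Bool // l.length = m}, c ^ ((true :: l.1).count true)) :=
          tsum_bool _
      _ = (1 + c) ^ m + (1 + c) ^ m * c := by
        have hfalse : (∑' l : {l : List Bool // l.length = m}, c ^ ((false :: l.1).count true))
            = (1 + c) ^ m := by
          rw [← ih]
          exact tsum_congr fun l => by rw [List.count_cons]; simp
        have htrue : (∑' l : {l : List Bool // l.length = m}, c ^ ((true :: l.1).count true))
            = (1 + c) ^ m * c := by
          rw [← ih, ← ENNReal.tsum_mul_right]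
          exact tsum_congr fun l => by rw [List.count_cons]; simp [pow_succ]
        rw [hfalse, htrue]
      _ = (1 + c) ^ (m + 1) := by rw [pow_succ, mul_one_add]

lemma master (hloop : ∀ v, IsPath E v v (st v ++ rt v))
    (hst_le : ∀ v, (st v).length ≤ T)
    (hrt_le : ∀ v, (st v).length + (rt v).length ≤ T)
    (hstF : ∀ v, ∃ w ∈ F, w <:+: label (st v))
    (hc : ∀ v, c ≤ pathProb p (st v ++ rt v))
    (x y : X) (n m : ℕ) (hnm : T * m + T ≤ n) :
    pF E p F n x y * (1 + c) ^ m ≤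
      ∑ j ∈ Finset.range (T * m + 1), kpow (step p) (n + j) x y := by
  classical
  set Big : Set (List (X × A × X)) :=
    {es | IsPath (Set.univ : Set (X × A × X)) x y es ∧ n ≤ es.length ∧
      es.length ≤ n + T * m} with hBig
  have hL : pF E p F n x y * (1 + c) ^ m
      = ∑' s : ({es : List (X × A × X) // es.length = n ∧ IsPath E x y es ∧
          Avoids F (label es)} × {l : List Bool // l.length = m}),
          pathProb p s.1.1 * c ^ (s.2.1.count true) := by
    rw [ENNReal.tsum_prod', pF, ← tsum_boolList c m, ← ENNReal.tsum_mul_right]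
    exact tsum_congr fun π => by rw [← ENNReal.tsum_mul_left]
  rw [hL]
  set i : ({es : List (X × A × X) // es.length = n ∧ IsPath E x y es ∧
      Avoids F (label es)} × {l : List Bool // l.length = m}) → List (X × A × X) :=
    fun s => enc st rt T s.2.1 x s.1.1 with hi
  have hinj : Function.Injective i := by
    intro s s' h
    have e1 := dec_enc hst_le hrt_le hstF s.2.1 x s.1.1 s.1.2.2.1 s.1.2.2.2
      (by rw [s.2.2, s.1.2.1]; exact hnm)
    have e2 := dec_enc hst_le hrt_le hstF s'.2.1 x s'.1.1 s'.1.2.2.1 s'.1.2.2.2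
      (by rw [s'.2.2, s'.1.2.1]; exact hnm)
    rw [s.2.2] at e1
    rw [s'.2.2] at e2
    have e3 : ((s.2.1 : List Bool), (s.1.1 : List (X × A × X)))
        = ((s'.2.1 : List Bool), (s'.1.1 : List (X × A × X))) := by
      rw [← e1, ← e2]
      exact congrArg _ h
    obtain ⟨e4, e5⟩ := Prod.mk.injEq _ _ _ _ ▸ e3
    exact Prod.ext (Subtype.ext e5) (Subtype.ext e4)
  have hle : ∀ s, pathProb p s.1.1 * c ^ (s.2.1.count true)
      ≤ Big.indicator (pathProb p) (i s) := by
    intro s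
    have hmem : i s ∈ Big := by
      refine ⟨isPath_mono (Set.subset_univ E) (enc_isPath hloop s.1.2.2.1 s.2.1), ?_, ?_⟩
      · rw [← s.1.2.1]; exact enc_length_ge s.2.1 x s.1.1
      · have := enc_length_le hrt_le s.2.1 x s.1.1
        rw [s.1.2.1, s.2.2] at this
        exact this
    rw [Set.indicator_of_mem hmem]
    exact enc_pathProb hc s.2.1 x s.1.1
  calc (∑' s, pathProb p s.1.1 * c ^ (s.2.1.count true))
      ≤ ∑' es, Big.indicator (pathProb p) es :=
        Summable.tsum_le_tsum_of_inj i hinj (fun _ _ => zero_le) hle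
          ENNReal.summable ENNReal.summable
    _ ≤ ∑' es, ∑ j ∈ Finset.range (T * m + 1),
          ({es' : List (X × A × X) | es'.length = n + j ∧
            IsPath (Set.univ : Set (X × A × X)) x y es'}.indicator (pathProb p) es) := by
        refine ENNReal.tsum_le_tsum fun es => ?_
        by_cases hmem : es ∈ Big
        · rw [Set.indicator_of_mem hmem]
          obtain ⟨hp1, hp2, hp3⟩ := hmem
          have hj : es.length - n ∈ Finset.range (T * m + 1) := by
            simp only [Finset.mem_range]; omega
          refine le_trans (le_of_eq ?_) (Finset.single_le_sum
            (f := fun j => ({es' : List (X × A × X) | es'.length = n + j ∧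
              IsPath (Set.univ : Set (X × A × X)) x y es'}.indicator (pathProb p) es))
            (fun _ _ => zero_le) hj)
          exact (Set.indicator_of_mem (show es ∈ {es' : List (X × A × X) |
            es'.length = n + (es.length - n) ∧
            IsPath (Set.univ : Set (X × A × X)) x y es'} from ⟨by omega, hp1⟩)
            (pathProb p)).symm
        · rw [Set.indicator_of_notMem hmem]
          exact zero_le
    _ = ∑ j ∈ Finset.range (T * m + 1), ∑' es,
          ({es' : List (X × A × X) | es'.length = n + j ∧
            IsPath (Set.univ : Set (X × A × X)) x y es'}.indicator (pathProb p) es) :=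
        Summable.tsum_finsetSum (fun _ _ => ENNReal.summable)
    _ = ∑ j ∈ Finset.range (T * m + 1), kpow (step p) (n + j) x y :=
        Finset.sum_congr rfl (fun j _ => (kpow_eq_pmass _ _ _).symm)

end Master


section Graph
variable {E : Set (X × A × X)} {F : Set (List A)} {p : X × A × X → ℝ≥0∞} {α : ℝ} {K : ℕ}

lemma reverse_path (hUC : UniformlyConnectedWith E K) :
    ∀ (es : List (X × A × X)) (x y : X), IsPath E x y es →
      ∃ es', IsPath E y x es' ∧ es'.length ≤ K * es.length := by
  intro es
  induction es with
  | nil => intro x y h; cases h; exact ⟨[], rfl, by simp⟩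
  | cons e tl ih =>
    intro x y h
    obtain ⟨he, hx, htl⟩ := h
    obtain ⟨r1, hr1, hr1len⟩ := ih e.2.2 y htl
    obtain ⟨r2, hr2, hr2len⟩ := hUC.2 e he
    refine ⟨r1 ++ r2, isPath_append hr1 (by rwa [hx] at hr2), ?_⟩
    rw [List.length_append, List.length_cons, Nat.mul_succ]
    omega

lemma exists_detour {D M : ℕ} (hUC : UniformlyConnectedWith E K)
    (hD : ∀ x : X, ∃ y : X, ∃ w ∈ F,
      (∃ es, IsPath E x y es ∧ es.length ≤ D) ∧ ∃ z es, IsPath E y z es ∧ label es = w)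
    (hM : ∀ w ∈ F, w.length ≤ M) (hFeps : ∀ v ∈ F, v ≠ ([] : List A)) (v : X) :
    ∃ s r : List (X × A × X), IsPath E v v (s ++ r) ∧ s ≠ [] ∧
      (∃ w ∈ F, w <:+: label s) ∧ s.length ≤ D + M ∧
      s.length + r.length ≤ (D + M) + K * (D + M) := by
  obtain ⟨y, w, hwF, ⟨es1, hes1, hes1len⟩, z, es2, hes2, hlab⟩ := hD v
  have hes2len : es2.length ≤ M := by
    have := hM w hwF
    rw [← hlab] at this
    simpa using this
  set s := es1 ++ es2 with hs
  have hslen : s.length ≤ D + M := by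
    rw [hs, List.length_append]; omega
  have hpath_s : IsPath E v z s := isPath_append hes1 hes2
  obtain ⟨r, hr, hrlen⟩ := reverse_path hUC s v z hpath_s
  refine ⟨s, r, isPath_append hpath_s hr, ?_, ⟨w, hwF, ?_⟩, hslen, ?_⟩
  · rw [hs]
    intro habs
    rcases List.append_eq_nil_iff.1 habs with ⟨-, h2⟩
    exact hFeps w hwF (by rw [← hlab, h2]; rfl)
  · rw [hs, label_append, ← hlab]
    exact (List.suffix_append _ _).isInfix
  · have h5 : K * s.length ≤ K * (D + M) := Nat.mul_le_mul le_rfl hslen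
    omega

lemma exists_cycle [Infinite X] (hSC : StronglyConnected E) (v : X) :
    ∃ es, IsPath E v v es ∧ 1 ≤ es.length := by
  obtain ⟨u, hu⟩ := exists_ne v
  obtain ⟨es1, hes1⟩ := hSC v u
  obtain ⟨es2, hes2⟩ := hSC u v
  refine ⟨es1 ++ es2, isPath_append hes1 hes2, ?_⟩
  rcases es1 with _ | ⟨e, tl⟩
  · exact absurd hes1.symm hu
  · simp

lemma exists_edge [Infinite X] (hSC : StronglyConnected E) : ∃ e, e ∈ E := by
  obtain ⟨v⟩ : Nonempty X := inferInstance
  obtain ⟨es, hes, hlen⟩ := exists_cycle hSC v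
  rcases es with _ | ⟨e, tl⟩
  · simp at hlen
  · exact ⟨e, hes.1⟩

lemma alpha_le_one [Infinite X] (hSC : StronglyConnected E) (hp : IsTransProb E p α) :
    ENNReal.ofReal α ≤ 1 := by
  obtain ⟨e, he⟩ := exists_edge hSC
  exact le_trans (hp.le_of_mem e he) (transProb_p_le_one hp e)

lemma length_join_replicate (j : ℕ) (es : List (X × A × X)) :
    (List.flatten (List.replicate j es)).length = j * es.length := by
  induction j with
  | zero => simp
  | succ n ih => simp [List.replicate_succ, ih, Nat.succ_mul]; omega

/-- `ρ ≥ α` at every base pair. -/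
lemma specRad_ge_alpha [Infinite X] (hSC : StronglyConnected E) (hp : IsTransProb E p α)
    (x₀ y₀ : X) : ENNReal.ofReal α ≤ specRad (step p) x₀ y₀ := by
  set a := ENNReal.ofReal α with ha
  obtain ⟨es1, hes1⟩ := hSC x₀ y₀
  obtain ⟨cyc, hcyc, hcyclen⟩ := exists_cycle hSC y₀
  refine Filter.le_limsup_of_frequently_le ?_ (by isBoundedDefault)
  rw [Filter.frequently_atTop]
  intro N
  set n := es1.length + (N + 1) * cyc.length with hn
  have hnN : N ≤ n := by
    have : N + 1 ≤ (N + 1) * cyc.length := Nat.le_mul_of_pos_right _ (by omega)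
    omega
  have hn1 : 1 ≤ n := by
    have : 1 ≤ (N + 1) * cyc.length := Nat.one_le_iff_ne_zero.2 (by positivity)
    omega
  refine ⟨n, hnN, ?_⟩
  set π := es1 ++ List.flatten (List.replicate (N + 1) cyc) with hπ
  have hπpath : IsPath E x₀ y₀ π := isPath_append hes1 (isPath_join_replicate hcyc _)
  have hπlen : π.length = n := by
    rw [hπ, List.length_append, length_join_replicate]
  have h1 : a ^ n ≤ kpow (step p) n x₀ y₀ := by
    calc a ^ n = a ^ π.length := by rw [hπlen]
      _ ≤ pathProb p π := transProb_pathProb_ge hp (isPath_edges_mem hπpath)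
      _ ≤ kpow (step p) π.length x₀ y₀ := kpow_ge_path hπpath
      _ = kpow (step p) n x₀ y₀ := by rw [hπlen]
  calc a = (a ^ n) ^ ((n : ℝ)⁻¹) := by
        rw [← ENNReal.rpow_natCast a n, ← ENNReal.rpow_mul,
          mul_inv_cancel₀ (by positivity : (n : ℝ) ≠ 0), ENNReal.rpow_one]
    _ ≤ kpow (step p) n x₀ y₀ ^ ((n : ℝ)⁻¹) :=
        ENNReal.rpow_le_rpow h1 (by positivity)

lemma specRad_le_one (hp : IsTransProb E p α) (x₀ y₀ : X) :
    specRad (step p) x₀ y₀ ≤ 1 := by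
  refine Filter.limsup_le_of_le (by isBoundedDefault) ?_
  filter_upwards with n
  exact ENNReal.rpow_le_one (kpow_le_one hp n x₀ y₀) (by positivity)

lemma kpow_sandwich (hSC : StronglyConnected E) (hp : IsTransProb E p α)
    (x y x₀ y₀ : X) :
    ∃ k k' : ℕ, ∀ ℓ : ℕ, ENNReal.ofReal α ^ (k + k') * kpow (step p) ℓ x y ≤
      kpow (step p) (k + ℓ + k') x₀ y₀ := by
  obtain ⟨es1, hes1⟩ := hSC x₀ x
  obtain ⟨es2, hes2⟩ := hSC y y₀
  refine ⟨es1.length, es2.length, fun ℓ => ?_⟩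
  set a := ENNReal.ofReal α
  have h1 : a ^ es1.length ≤ kpow (step p) es1.length x₀ x :=
    le_trans (transProb_pathProb_ge hp (isPath_edges_mem hes1)) (kpow_ge_path hes1)
  have h2 : a ^ es2.length ≤ kpow (step p) es2.length y y₀ :=
    le_trans (transProb_pathProb_ge hp (isPath_edges_mem hes2)) (kpow_ge_path hes2)
  calc a ^ (es1.length + es2.length) * kpow (step p) ℓ x y
      = (a ^ es1.length * kpow (step p) ℓ x y) * a ^ es2.length := by
        rw [pow_add]; ring
    _ ≤ (kpow (step p) es1.length x₀ x * kpow (step p) ℓ x y) *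
          kpow (step p) es2.length y y₀ := by
        exact mul_le_mul' (mul_le_mul' h1 le_rfl) h2
    _ ≤ kpow (step p) (es1.length + ℓ) x₀ y * kpow (step p) es2.length y y₀ :=
        mul_le_mul' (kpow_ge_mul _ _ _ _ _ _) le_rfl
    _ ≤ kpow (step p) (es1.length + ℓ + es2.length) x₀ y₀ := kpow_ge_mul _ _ _ _ _ _

lemma eventually_kpow_le {B : ℝ≥0∞} (hp : IsTransProb E p α) (x₀ y₀ : X)
    (hB : specRad (step p) x₀ y₀ < B) :
    ∀ᶠ n : ℕ in Filter.atTop, kpow (step p) n x₀ y₀ ≤ B ^ n := by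
  have h1 := Filter.eventually_lt_of_limsup_lt hB (by isBoundedDefault)
  filter_upwards [h1, Filter.eventually_ge_atTop 1] with n hn hn1
  calc kpow (step p) n x₀ y₀
      = (kpow (step p) n x₀ y₀ ^ ((n : ℝ)⁻¹)) ^ (n : ℕ) := by
        rw [← ENNReal.rpow_natCast (_ ^ _) n, ← ENNReal.rpow_mul,
          inv_mul_cancel₀ (by positivity : (n : ℝ) ≠ 0), ENNReal.rpow_one]
    _ ≤ B ^ n := pow_le_pow_left' hn.le n

end Graph


section Asymp
open Real Filter

lemma tendsto_log_nat_succ_div :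
    Tendsto (fun n : ℕ => Real.log ((n : ℝ) + 1) / n) atTop (nhds 0) := by
  have h1 : Tendsto (fun x : ℝ => Real.log x / x) atTop (nhds 0) :=
    Real.isLittleO_log_id_atTop.tendsto_div_nhds_zero
  have h2 : Tendsto (fun n : ℕ => ((n : ℝ) + 1)) atTop atTop :=
    tendsto_atTop_add_const_right _ 1 tendsto_natCast_atTop_atTop
  have h3 : Tendsto (fun n : ℕ => Real.log ((n : ℝ) + 1) / ((n : ℝ) + 1)) atTop (nhds 0) :=
    h1.comp h2
  have h4 : Tendsto (fun n : ℕ => ((n : ℝ) + 1) / n) atTop (nhds 1) := by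
    have : Tendsto (fun n : ℕ => 1 + 1 / (n : ℝ)) atTop (nhds (1 + 0)) :=
      tendsto_const_nhds.add tendsto_one_div_atTop_nhds_zero_nat
    rw [add_zero] at this
    refine this.congr' ?_
    filter_upwards [eventually_ge_atTop 1] with n hn
    have hn' : (n : ℝ) ≠ 0 := by positivity
    field_simp
  have h5 := h3.mul h4
  rw [zero_mul] at h5
  refine h5.congr' ?_
  filter_upwards [eventually_ge_atTop 1] with n hn
  have hn' : (n : ℝ) ≠ 0 := by positivity
  field_simp

lemma eventually_main_real (T k2 : ℕ) (hT : 1 ≤ T) (Br Bbr A2r cr thr : ℝ)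
    (hB : 0 < Br) (hBb : 1 ≤ Bbr) (hA2 : 0 < A2r) (hc : 0 ≤ cr) (hth : 0 < thr)
    (hlt : Br * Bbr < thr * (1 + cr) ^ ((T : ℝ)⁻¹)) :
    ∀ᶠ n : ℕ in atTop, ((T * (n / T - 1) + 1 : ℕ) : ℝ) * Br ^ n *
      Bbr ^ (T * (n / T - 1) + k2) ≤ A2r * (1 + cr) ^ (n / T - 1) * thr ^ n := by
  have hc1 : (0:ℝ) < 1 + cr := by linarith
  set m : ℕ → ℕ := fun n => n / T - 1 with hm
  have hub : ∀ n, T * m n ≤ n := by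
    intro n
    calc T * m n ≤ T * (n / T) := Nat.mul_le_mul le_rfl (Nat.sub_le _ _)
      _ ≤ n := by rw [mul_comm]; exact Nat.div_mul_le_self n T
  have hlb : ∀ n, T ≤ n → n ≤ T * m n + 2 * T := by
    intro n hn
    have h1 : n % T < T := Nat.mod_lt _ (by omega)
    have h3 : 1 ≤ n / T := (Nat.one_le_div_iff (by omega)).2 hn
    have h4 : T * (n / T) = T * m n + T := by
      have h5 : n / T = (n / T - 1) + 1 := by omega
      calc T * (n / T) = T * ((n / T - 1) + 1) := by rw [← h5]
        _ = T * m n + T := by rw [hm]; ring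
    have h6 := Nat.div_add_mod n T
    omega
  have hq1 : Tendsto (fun n : ℕ => ((T * m n : ℕ) : ℝ) / n) atTop (nhds 1) := by
    have hlow : Tendsto (fun n : ℕ => 1 - (2 * T : ℝ) / n) atTop (nhds (1 - 0)) :=
      tendsto_const_nhds.sub (tendsto_const_div_atTop_nhds_zero_nat _)
    rw [sub_zero] at hlow
    refine tendsto_of_tendsto_of_tendsto_of_le_of_le' hlow tendsto_const_nhds ?_ ?_
    · filter_upwards [eventually_ge_atTop T, eventually_ge_atTop 1] with n hn hn1
      have hnpos : (0:ℝ) < n := by positivity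
      have hcast : (n : ℝ) ≤ (T * m n : ℕ) + 2 * T := by exact_mod_cast hlb n hn
      have heq : 1 - (2 * T : ℝ) / n = ((n : ℝ) - 2 * T) / n := by field_simp
      rw [heq]
      gcongr
      linarith
    · filter_upwards [eventually_ge_atTop 1] with n hn1
      have hnpos : (0:ℝ) < n := by positivity
      rw [div_le_one hnpos]
      exact_mod_cast hub n
  have hm1 : Tendsto (fun n : ℕ => (m n : ℝ) / n) atTop (nhds (T : ℝ)⁻¹) := by
    have h := hq1.div_const (T : ℝ)
    rw [one_div] at h
    refine h.congr' ?_
    filter_upwards with n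
    have hT' : (T:ℝ) ≠ 0 := by positivity
    push_cast
    rw [div_right_comm, mul_div_cancel_left₀ _ hT']
  have hm2 : Tendsto (fun n : ℕ => Real.log ((T * m n + 1 : ℕ) : ℝ) / n) atTop (nhds 0) := by
    refine tendsto_of_tendsto_of_tendsto_of_le_of_le' tendsto_const_nhds
      tendsto_log_nat_succ_div ?_ ?_
    · filter_upwards [eventually_ge_atTop 1] with n hn
      have h1 : (1:ℝ) ≤ ((T * m n + 1 : ℕ) : ℝ) := by exact_mod_cast Nat.le_add_left 1 _
      exact div_nonneg (Real.log_nonneg h1) (by positivity)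
    · filter_upwards [eventually_ge_atTop 1] with n hn
      have h1 : ((T * m n + 1 : ℕ) : ℝ) ≤ (n : ℝ) + 1 := by
        exact_mod_cast Nat.add_le_add_right (hub n) 1
      have h2 : (0:ℝ) < ((T * m n + 1 : ℕ) : ℝ) := by positivity
      gcongr
  have hf2 : Tendsto (fun n : ℕ => ((T * m n + k2 : ℕ) : ℝ) / n) atTop (nhds 1) := by
    have h := hq1.add (tendsto_const_div_atTop_nhds_zero_nat (k2 : ℝ))
    rw [add_zero] at h
    refine h.congr' ?_
    filter_upwards with n
    push_cast
    rw [← add_div]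
  have hf4 : Tendsto (fun n : ℕ => Real.log A2r / n) atTop (nhds 0) :=
    tendsto_const_div_atTop_nhds_zero_nat _
  have hLneg : Real.log Br + Real.log Bbr - (T:ℝ)⁻¹ * Real.log (1 + cr)
      - Real.log thr < 0 := by
    have h1 : Real.log (Br * Bbr) < Real.log (thr * (1 + cr) ^ ((T:ℝ)⁻¹)) :=
      Real.log_lt_log (by positivity) hlt
    rw [Real.log_mul (ne_of_gt hB) (by positivity),
      Real.log_mul (ne_of_gt hth) (by positivity), Real.log_rpow hc1] at h1
    linarith
  have hG : Tendsto (fun n : ℕ => Real.log ((T * m n + 1 : ℕ) : ℝ) / n + Real.log Br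
      + (((T * m n + k2 : ℕ) : ℝ) / n) * Real.log Bbr - Real.log A2r / n
      - ((m n : ℝ) / n) * Real.log (1 + cr) - Real.log thr) atTop
      (nhds (Real.log Br + Real.log Bbr - (T:ℝ)⁻¹ * Real.log (1 + cr) - Real.log thr)) := by
    have h := ((((hm2.add (tendsto_const_nhds (x := Real.log Br))).add
      (hf2.mul_const (Real.log Bbr))).sub hf4).sub
      (hm1.mul_const (Real.log (1 + cr)))).sub (tendsto_const_nhds (x := Real.log thr))
    simpa using h
  have hev := hG.eventually_lt_const hLneg
  filter_upwards [hev, eventually_ge_atTop 1] with n hn hn1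
  have hnpos : (0:ℝ) < n := by positivity
  have hL1 : (0:ℝ) < ((T * m n + 1 : ℕ) : ℝ) * Br ^ n * Bbr ^ (T * m n + k2) := by positivity
  have hR1 : (0:ℝ) < A2r * (1 + cr) ^ (m n) * thr ^ n := by positivity
  rw [← Real.log_le_log_iff hL1 hR1]
  have hlogL : Real.log (((T * m n + 1 : ℕ) : ℝ) * Br ^ n * Bbr ^ (T * m n + k2)) =
      Real.log ((T * m n + 1 : ℕ) : ℝ) + (n : ℝ) * Real.log Br
        + ((T * m n + k2 : ℕ) : ℝ) * Real.log Bbr := by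
    rw [Real.log_mul (by positivity) (by positivity),
      Real.log_mul (by positivity) (by positivity), Real.log_pow, Real.log_pow]
  have hlogR : Real.log (A2r * (1 + cr) ^ (m n) * thr ^ n) =
      Real.log A2r + (m n : ℝ) * Real.log (1 + cr) + (n : ℝ) * Real.log thr := by
    rw [Real.log_mul (by positivity) (by positivity),
      Real.log_mul (by positivity) (by positivity), Real.log_pow, Real.log_pow]
  rw [hlogL, hlogR]
  have h7 := mul_lt_mul_of_pos_left hn hnpos
  rw [mul_zero] at h7
  have hexp : (n : ℝ) * (Real.log ((T * m n + 1 : ℕ) : ℝ) / n + Real.log Br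
      + (((T * m n + k2 : ℕ) : ℝ) / n) * Real.log Bbr - Real.log A2r / n
      - ((m n : ℝ) / n) * Real.log (1 + cr) - Real.log thr) =
      (Real.log ((T * m n + 1 : ℕ) : ℝ) + (n : ℝ) * Real.log Br
        + ((T * m n + k2 : ℕ) : ℝ) * Real.log Bbr)
      - (Real.log A2r + (m n : ℝ) * Real.log (1 + cr) + (n : ℝ) * Real.log thr) := by
    field_simp
    ring
  rw [hexp] at h7
  linarith

end Asymp


section Final
open Filter

variable {E : Set (X × A × X)} {F : Set (List A)} {p : X × A × X → ℝ≥0∞} {α : ℝ} {K : ℕ}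

lemma rhoF_le_theta [Infinite X]
    (hUCw : UniformlyConnectedWith E K) (hp : IsTransProb E p α)
    (st rt : X → List (X × A × X)) (T : ℕ) (hT : 1 ≤ T)
    (hloop : ∀ v, IsPath E v v (st v ++ rt v))
    (hst_le : ∀ v, (st v).length ≤ T)
    (hrt_le : ∀ v, (st v).length + (rt v).length ≤ T)
    (hstF : ∀ v, ∃ w ∈ F, w <:+: label (st v))
    (x₀ y₀ x y : X) :
    rhoF E p F x y ≤ specRad (step p) x₀ y₀ *
      ((1 + ENNReal.ofReal α ^ T)⁻¹) ^ ((T : ℝ)⁻¹) := by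
  classical
  set a : ℝ≥0∞ := ENNReal.ofReal α with ha
  have ha0 : a ≠ 0 := (ENNReal.ofReal_pos.2 hp.alpha_pos).ne'
  have hatop : a ≠ ∞ := ENNReal.ofReal_ne_top
  have ha1 : a ≤ 1 := alpha_le_one hUCw.1 hp
  set c : ℝ≥0∞ := a ^ T with hcdef
  have hc0 : c ≠ 0 := pow_ne_zero T ha0
  have hctop : c ≠ ∞ := ENNReal.pow_ne_top hatop
  have hc_path : ∀ v, c ≤ pathProb p (st v ++ rt v) := by
    intro v
    calc c = a ^ T := rfl
      _ ≤ a ^ (st v ++ rt v).length :=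
        pow_le_pow_right_of_le_one' ha1 (by rw [List.length_append]; exact hrt_le v)
      _ ≤ pathProb p (st v ++ rt v) :=
        transProb_pathProb_ge hp (isPath_edges_mem (hloop v))
  set ρ : ℝ≥0∞ := specRad (step p) x₀ y₀ with hρdef
  have hρa : a ≤ ρ := specRad_ge_alpha hUCw.1 hp x₀ y₀
  have hρ0 : ρ ≠ 0 := fun h => ha0 (le_antisymm (h ▸ hρa) zero_le)
  have hρ1 : ρ ≤ 1 := specRad_le_one hp x₀ y₀
  have hρtop : ρ ≠ ∞ := ne_top_of_le_ne_top ENNReal.one_ne_top hρ1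
  set dd : ℝ≥0∞ := ((1 + c)⁻¹) ^ ((T : ℝ)⁻¹) with hdddef
  have h1c : 1 < 1 + c := ENNReal.lt_add_right ENNReal.one_ne_top hc0
  have h1ctop : (1 + c) ≠ ∞ := by
    rw [ENNReal.add_ne_top]; exact ⟨ENNReal.one_ne_top, hctop⟩
  have hinv1 : (1 + c)⁻¹ < 1 := ENNReal.inv_lt_one.2 h1c
  have hinv0 : (1 + c)⁻¹ ≠ 0 := ENNReal.inv_ne_zero.2 h1ctop
  have hTpos : (0:ℝ) < (T : ℝ)⁻¹ := inv_pos.2 (by exact_mod_cast hT)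
  have h1c0 : (1 + c) ≠ 0 := (zero_lt_one.trans h1c).ne'
  have hdd0 : dd ≠ 0 :=
    (ENNReal.rpow_pos (pos_iff_ne_zero.2 hinv0) (ENNReal.inv_ne_top.2 h1c0)).ne'
  have hddtop : dd ≠ ∞ :=
    ENNReal.rpow_ne_top_of_nonneg hTpos.le (ENNReal.inv_ne_top.2 h1c0)
  set θ := ρ * dd with hθdef
  have hθ0 : θ ≠ 0 := mul_ne_zero hρ0 hdd0
  have hθtop : θ ≠ ∞ := ENNReal.mul_ne_top hρtop hddtop
  refine le_of_forall_gt_imp_ge_of_dense fun θ' hθ' => ?_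
  by_cases hθ'top : θ' = ∞
  · rw [hθ'top]; exact le_top
  have hθ'pos : 0 < θ' := (zero_le (a := θ)).trans_lt hθ'
  set q := θ' / θ with hqdef
  have hq1 : 1 < q := by
    rw [hqdef, ENNReal.lt_div_iff_mul_lt (Or.inl hθ0) (Or.inl hθtop), one_mul]
    exact hθ'
  set s := min q 2 with hsdef
  have hs1 : 1 < s := lt_min hq1 ENNReal.one_lt_two
  have hstop : s ≠ ∞ := ne_top_of_le_ne_top ENNReal.ofNat_ne_top (min_le_right _ _)
  have hs0 : s ≠ 0 := (zero_lt_one.trans hs1).ne'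
  set t := s ^ ((4:ℝ)⁻¹) with htdef
  have ht1 : 1 < t := ENNReal.one_lt_rpow hs1 (by norm_num)
  have httop : t ≠ ∞ := ENNReal.rpow_ne_top_of_nonneg (by norm_num) hstop
  set B := ρ * t with hBdef
  have hρB : ρ < B := by
    calc ρ = ρ * 1 := (mul_one ρ).symm
      _ < ρ * t := (ENNReal.mul_lt_mul_iff_right hρ0 hρtop).2 ht1
  have hB0 : B ≠ 0 := mul_ne_zero hρ0 (zero_lt_one.trans ht1).ne'
  have hBtop : B ≠ ∞ := ENNReal.mul_ne_top hρtop httop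
  set Bb := max 1 B with hBbdef
  have hBb1 : 1 ≤ Bb := le_max_left _ _
  have hBbB : B ≤ Bb := le_max_right _ _
  have hBbtop : Bb ≠ ∞ := by
    rcases max_choice 1 B with h | h <;> rw [hBbdef, h]
    · exact ENNReal.one_ne_top
    · exact hBtop
  have hBbt : Bb ≤ t := by
    refine max_le ht1.le ?_
    calc B = ρ * t := rfl
      _ ≤ 1 * t := mul_le_mul_left hρ1 t
      _ = t := one_mul t
  have htt : t * t = s ^ ((2:ℝ)⁻¹) := by
    rw [htdef, ← ENNReal.rpow_add _ _ hs0 hstop]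
    norm_num
  have hkey : B * Bb < θ' * (1 + c) ^ ((T:ℝ)⁻¹) := by
    have hddinv : dd⁻¹ = (1 + c) ^ ((T:ℝ)⁻¹) := by
      rw [hdddef, ENNReal.inv_rpow, inv_inv]
    have hcanc : ρ * q = θ' * dd⁻¹ := by
      have h1 : θ * q = θ' := ENNReal.mul_div_cancel hθ0 hθtop
      have h2 : dd * dd⁻¹ = 1 := ENNReal.mul_inv_cancel hdd0 hddtop
      calc ρ * q = ρ * q * (dd * dd⁻¹) := by rw [h2, mul_one]
        _ = (ρ * dd) * q * dd⁻¹ := by ring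
        _ = θ' * dd⁻¹ := by rw [← hθdef, h1]
    calc B * Bb ≤ (ρ * t) * t := mul_le_mul' le_rfl hBbt
      _ = ρ * (t * t) := by ring
      _ = ρ * s ^ ((2:ℝ)⁻¹) := by rw [htt]
      _ < ρ * s := by
          refine (ENNReal.mul_lt_mul_iff_right hρ0 hρtop).2 ?_
          calc s ^ ((2:ℝ)⁻¹) < s ^ (1:ℝ) :=
              ENNReal.rpow_lt_rpow_of_exponent_lt hs1 hstop (by norm_num)
            _ = s := ENNReal.rpow_one s
      _ ≤ ρ * q := mul_le_mul_right (min_le_left _ _) ρ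
      _ = θ' * dd⁻¹ := hcanc
      _ = θ' * (1 + c) ^ ((T:ℝ)⁻¹) := by rw [hddinv]
  obtain ⟨k, k', hsand⟩ := kpow_sandwich hUCw.1 hp x y x₀ y₀
  set k2 := k + k' with hk2def
  set A2 : ℝ≥0∞ := a ^ k2 with hA2def
  have hA20 : A2 ≠ 0 := pow_ne_zero _ ha0
  have hA2top : A2 ≠ ∞ := ENNReal.pow_ne_top hatop
  have hBr : 0 < B.toReal := ENNReal.toReal_pos hB0 hBtop
  have hBbr1 : 1 ≤ Bb.toReal := by
    rw [← ENNReal.toReal_one]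
    exact (ENNReal.toReal_le_toReal ENNReal.one_ne_top hBbtop).2 hBb1
  have hA2r : 0 < A2.toReal := ENNReal.toReal_pos hA20 hA2top
  have hcr : 0 ≤ c.toReal := ENNReal.toReal_nonneg
  have hθ'r : 0 < θ'.toReal := ENNReal.toReal_pos hθ'pos.ne' hθ'top
  have h1cr : (1 + c).toReal = 1 + c.toReal := by
    rw [ENNReal.toReal_add ENNReal.one_ne_top hctop, ENNReal.toReal_one]
  have hltr : B.toReal * Bb.toReal < θ'.toReal * (1 + c.toReal) ^ ((T:ℝ)⁻¹) := by
    have hfin1 : B * Bb ≠ ∞ := ENNReal.mul_ne_top hBtop hBbtop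
    have hfin2 : θ' * (1 + c) ^ ((T:ℝ)⁻¹) ≠ ∞ :=
      ENNReal.mul_ne_top hθ'top (ENNReal.rpow_ne_top_of_nonneg hTpos.le h1ctop)
    have h3 := (ENNReal.toReal_lt_toReal hfin1 hfin2).2 hkey
    rw [show (B * Bb).toReal = B.toReal * Bb.toReal from ENNReal.toReal_mul,
      show (θ' * (1 + c) ^ ((T:ℝ)⁻¹)).toReal
        = θ'.toReal * ((1 + c) ^ ((T:ℝ)⁻¹)).toReal from ENNReal.toReal_mul] at h3
    rw [← h1cr, ENNReal.toReal_rpow]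
    exact h3
  have hev_real := eventually_main_real T k2 hT B.toReal Bb.toReal A2.toReal c.toReal
    θ'.toReal hBr hBbr1 hA2r hcr hθ'r hltr
  obtain ⟨N, hN⟩ := eventually_atTop.1 (eventually_kpow_le hp x₀ y₀ hρB)
  refine Filter.limsup_le_of_le (by isBoundedDefault) ?_
  filter_upwards [hev_real, eventually_ge_atTop (2 * T), eventually_ge_atTop N,
    eventually_ge_atTop 1] with n hreal h2T hnN hn1
  set m := n / T - 1 with hmdef
  have hTpos' : 0 < T := hT
  have hdiv2 : 2 ≤ n / T := (Nat.le_div_iff_mul_le hTpos').2 (by omega)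
  have hm1 : m + 1 = n / T := by omega
  have hmT : T * m + T ≤ n := by
    have h4 : T * (m + 1) ≤ n := by rw [hm1, mul_comm]; exact Nat.div_mul_le_self n T
    calc T * m + T = T * (m + 1) := (Nat.mul_succ T m).symm
      _ ≤ n := h4
  have hmaster := master hloop hst_le hrt_le hstF hc_path x y n m hmT
  have hsum : ∑ j ∈ Finset.range (T * m + 1), a ^ k2 * kpow (step p) (n + j) x y ≤
      (↑(T * m + 1) : ℝ≥0∞) * (B ^ n * Bb ^ (T * m + k2)) := by
    have hterm : ∀ j ∈ Finset.range (T * m + 1),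
        a ^ k2 * kpow (step p) (n + j) x y ≤ B ^ n * Bb ^ (T * m + k2) := by
      intro j hj
      have hj' : j ≤ T * m := by simpa [Nat.lt_succ_iff] using hj
      calc a ^ k2 * kpow (step p) (n + j) x y
          ≤ kpow (step p) (k + (n + j) + k') x₀ y₀ := hsand (n + j)
        _ ≤ B ^ (k + (n + j) + k') := hN _ (by omega)
        _ = B ^ n * B ^ (j + k2) := by
            rw [← pow_add]
            congr 1
            omega
        _ ≤ B ^ n * Bb ^ (j + k2) := mul_le_mul_right (pow_le_pow_left' hBbB _) _
        _ ≤ B ^ n * Bb ^ (T * m + k2) :=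
            mul_le_mul_right (pow_le_pow_right' hBb1 (by omega)) _
    calc ∑ j ∈ Finset.range (T * m + 1), a ^ k2 * kpow (step p) (n + j) x y
        ≤ (Finset.range (T * m + 1)).card • (B ^ n * Bb ^ (T * m + k2)) :=
          Finset.sum_le_card_nsmul _ _ _ hterm
      _ = (↑(T * m + 1) : ℝ≥0∞) * (B ^ n * Bb ^ (T * m + k2)) := by
          rw [Finset.card_range, nsmul_eq_mul]
  have hENN : (↑(T * m + 1) : ℝ≥0∞) * (B ^ n * Bb ^ (T * m + k2)) ≤
      A2 * ((1 + c) ^ m * θ' ^ n) := by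
    have hfinL : (↑(T * m + 1) : ℝ≥0∞) * (B ^ n * Bb ^ (T * m + k2)) ≠ ∞ :=
      ENNReal.mul_ne_top (ENNReal.natCast_ne_top _)
        (ENNReal.mul_ne_top (ENNReal.pow_ne_top hBtop) (ENNReal.pow_ne_top hBbtop))
    have hfinR : A2 * ((1 + c) ^ m * θ' ^ n) ≠ ∞ :=
      ENNReal.mul_ne_top hA2top
        (ENNReal.mul_ne_top (ENNReal.pow_ne_top h1ctop) (ENNReal.pow_ne_top hθ'top))
    rw [← ENNReal.toReal_le_toReal hfinL hfinR]
    rw [show ((↑(T * m + 1) : ℝ≥0∞) * (B ^ n * Bb ^ (T * m + k2))).toReal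
        = (↑(T * m + 1) : ℝ≥0∞).toReal * (B ^ n * Bb ^ (T * m + k2)).toReal from
        ENNReal.toReal_mul,
      show (B ^ n * Bb ^ (T * m + k2)).toReal = (B ^ n).toReal * (Bb ^ (T * m + k2)).toReal from
        ENNReal.toReal_mul,
      show (A2 * ((1 + c) ^ m * θ' ^ n)).toReal
        = A2.toReal * ((1 + c) ^ m * θ' ^ n).toReal from ENNReal.toReal_mul,
      show ((1 + c) ^ m * θ' ^ n).toReal = ((1 + c) ^ m).toReal * (θ' ^ n).toReal from
        ENNReal.toReal_mul,
      show (B ^ n).toReal = B.toReal ^ n from ENNReal.toReal_pow _ _,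
      show (Bb ^ (T * m + k2)).toReal = Bb.toReal ^ (T * m + k2) from ENNReal.toReal_pow _ _,
      show ((1 + c) ^ m).toReal = (1 + c).toReal ^ m from ENNReal.toReal_pow _ _,
      show (θ' ^ n).toReal = θ'.toReal ^ n from ENNReal.toReal_pow _ _,
      ENNReal.toReal_natCast, h1cr]
    calc ((T * m + 1 : ℕ) : ℝ) * (B.toReal ^ n * Bb.toReal ^ (T * m + k2))
        = ((T * m + 1 : ℕ) : ℝ) * B.toReal ^ n * Bb.toReal ^ (T * m + k2) := by ring
      _ ≤ A2.toReal * (1 + c.toReal) ^ m * θ'.toReal ^ n := hreal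
      _ = A2.toReal * ((1 + c.toReal) ^ m * θ'.toReal ^ n) := by ring
  have hchain : A2 * (pF E p F n x y * (1 + c) ^ m) ≤ A2 * ((1 + c) ^ m * θ' ^ n) := by
    calc A2 * (pF E p F n x y * (1 + c) ^ m)
        ≤ A2 * ∑ j ∈ Finset.range (T * m + 1), kpow (step p) (n + j) x y :=
          mul_le_mul_right hmaster A2
      _ = ∑ j ∈ Finset.range (T * m + 1), a ^ k2 * kpow (step p) (n + j) x y := by
          rw [Finset.mul_sum]
      _ ≤ (↑(T * m + 1) : ℝ≥0∞) * (B ^ n * Bb ^ (T * m + k2)) := hsum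
      _ ≤ A2 * ((1 + c) ^ m * θ' ^ n) := hENN
  have hpFn : pF E p F n x y ≤ θ' ^ n := by
    have h1 := (ENNReal.mul_le_mul_iff_right hA20 hA2top).1 hchain
    have h2 : (1 + c) ^ m * pF E p F n x y ≤ (1 + c) ^ m * (θ' ^ n) := by
      calc (1 + c) ^ m * pF E p F n x y = pF E p F n x y * (1 + c) ^ m := mul_comm _ _
        _ ≤ (1 + c) ^ m * θ' ^ n := h1
    exact (ENNReal.mul_le_mul_iff_right (pow_ne_zero _ h1c0) (ENNReal.pow_ne_top h1ctop)).1 h2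
  calc pF E p F n x y ^ ((n : ℝ)⁻¹)
      ≤ (θ' ^ n) ^ ((n : ℝ)⁻¹) := ENNReal.rpow_le_rpow hpFn (by positivity)
    _ = θ' := by
        rw [← ENNReal.rpow_natCast θ' n, ← ENNReal.rpow_mul,
          mul_inv_cancel₀ (by positivity : (n:ℝ) ≠ 0), ENNReal.rpow_one]

end Final


theorem statement3' [Infinite X] [Fintype A]
    (E : Set (X × A × X)) (hUC : UniformlyConnected E)
    (p : X × A × X → ℝ≥0∞) (α : ℝ) (hp : IsTransProb E p α)
    (F : Set (List A)) (hFfin : F.Finite) (hFne : F.Nonempty)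
    (hFeps : ∀ v ∈ F, v ≠ ([] : List A))
    (hFdense : RelativelyDense E F) :
    ∀ x₀ y₀ : X, (⨆ x : X, ⨆ y : X, rhoF E p F x y) < specRad (step p) x₀ y₀ := by
  intro x₀ y₀
  classical
  obtain ⟨K, hUCw⟩ := hUC
  obtain ⟨D, hD⟩ := hFdense
  set M := hFfin.toFinset.sup List.length with hM
  have hMle : ∀ w ∈ F, w.length ≤ M := fun w hw =>
    Finset.le_sup (hFfin.mem_toFinset.2 hw)
  have hdet := fun v => exists_detour hUCw hD hMle hFeps v
  choose st rt h1 h2 h3 h4 h5 using hdet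
  set T := (D + M) + K * (D + M) + 1 with hT
  have hT1 : 1 ≤ T := by omega
  have hst_le : ∀ v, (st v).length ≤ T := fun v => by have := h4 v; omega
  have hrt_le : ∀ v, (st v).length + (rt v).length ≤ T := fun v => by have := h5 v; omega
  set a := ENNReal.ofReal α with hadef
  set c := a ^ T with hcdef
  set ρ := specRad (step p) x₀ y₀ with hρdef
  set dd := ((1 + c)⁻¹) ^ ((T : ℝ)⁻¹) with hdd
  have hbound : ∀ x y : X, rhoF E p F x y ≤ ρ * dd := fun x y =>
    rhoF_le_theta hUCw hp st rt T hT1 h1 hst_le hrt_le h3 x₀ y₀ x y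
  have hsup : (⨆ x : X, ⨆ y : X, rhoF E p F x y) ≤ ρ * dd :=
    iSup_le fun x => iSup_le fun y => hbound x y
  refine lt_of_le_of_lt hsup ?_
  have ha0 : a ≠ 0 := (ENNReal.ofReal_pos.2 hp.alpha_pos).ne'
  have hc0 : c ≠ 0 := pow_ne_zero _ ha0
  have hctop : c ≠ ∞ := ENNReal.pow_ne_top ENNReal.ofReal_ne_top
  have h1c : 1 < 1 + c := ENNReal.lt_add_right ENNReal.one_ne_top hc0
  have hdd1 : dd < 1 := ENNReal.rpow_lt_one (ENNReal.inv_lt_one.2 h1c)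
      (inv_pos.2 (by exact_mod_cast hT1))
  have hρa : a ≤ ρ := specRad_ge_alpha hUCw.1 hp x₀ y₀
  have hρ0 : ρ ≠ 0 := fun h => ha0 (le_antisymm (h ▸ hρa) zero_le)
  have hρtop : ρ ≠ ∞ := ne_top_of_le_ne_top ENNReal.one_ne_top (specRad_le_one hp x₀ y₀)
  calc ρ * dd < ρ * 1 := (ENNReal.mul_lt_mul_iff_right hρ0 hρtop).2 hdd1
    _ = ρ := mul_one ρ

end S3

/-- For a uniformly connected labelled graph with transition probabilities
`p(e) ≥ α > 0` and row sums `≤ 1`, and a finite nonempty relatively dense set `F`,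
`sup_{x,y} ρ_{x,y}(P_F) < ρ(P)` strictly (for strongly connected graphs
`ρ(P) = limsup_n p^{(n)}(x₀,y₀)^{1/n}` does not depend on the base pair `(x₀,y₀)`). -/
theorem statement3 {X A : Type*} [Infinite X] [Fintype A]
    (E : Set (X × A × X)) (hUC : UniformlyConnected E)
    (p : X × A × X → ℝ≥0∞) (α : ℝ) (hp : IsTransProb E p α)
    (F : Set (List A)) (hFfin : F.Finite) (hFne : F.Nonempty)
    (hFeps : ∀ v ∈ F, v ≠ ([] : List A))
    (hFdense : RelativelyDense E F) :
    ∀ x₀ y₀ : X, (⨆ x : X, ⨆ y : X, rhoF E p F x y) < specRad (step p) x₀ y₀ :=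
  S3.statement3' E hUC p α hp F hFfin hFne hFeps hFdense
end

section
/- Let (X,E,ℓ) be a uniformly connected labelled directed graph over a finite alphabet Σ with connectivity constant K, equipped with transition probabilities p(e) ≥ α > 0 and row sums Σ_{e:e⁻=x} p(e) ≤ 1, and let h : X → (0,∞) satisfy Σ_{y∈X} p(x,y)h(y) = ρ(P)·h(x) for every x ∈ X. Then ρ(P) ≥ α, and the h-transformed probabilities p^h(x,a,y) = p(x,a,y)·h(y)/(ρ(P)·h(x)) satisfy p^h(e) ≥ (α/ρ(P))^{K+1} > 0 for every edge e ∈ E. -/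
open scoped ENNReal

open PaperFormal

section Aux

variable {X A : Type*}

/-- Row sums of the kernel `step p` are at most 1. -/
lemma step_rowsum_le_one [Fintype A] {E : Set (X × A × X)} {p : X × A × X → ℝ≥0∞} {α : ℝ}
    (hp : IsTransProb E p α) (x : X) : (∑' y : X, step p x y) ≤ 1 := by
  have : (∑' y : X, step p x y) = ∑' (a : A) (y : X), p (x, a, y) := by
    simp only [step]
    exact ENNReal.tsum_comm
  rw [this]
  exact hp.rowsum_le_one x

lemma kpow_rowsum_le_one [Fintype A] {E : Set (X × A × X)} {p : X × A × X → ℝ≥0∞} {α : ℝ}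
    (hp : IsTransProb E p α) (n : ℕ) (x : X) :
    (∑' y : X, kpow (step p) n x y) ≤ 1 := by
  classical
  induction n with
  | zero =>
      simp only [kpow]
      rw [show (fun y => if x = y then (1:ℝ≥0∞) else 0) = fun y => if y = x then (1:ℝ≥0∞) else 0
        from funext fun y => by by_cases hxy : x = y <;> simp [hxy, eq_comm]]
      rw [tsum_ite_eq]
  | succ n ih =>
      simp only [kpow]
      rw [ENNReal.tsum_comm]
      calc (∑' (z : X) (y : X), kpow (step p) n x z * step p z y)
          = ∑' z : X, kpow (step p) n x z * ∑' y : X, step p z y := by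
            congr 1; funext z; exact ENNReal.tsum_mul_left
        _ ≤ ∑' z : X, kpow (step p) n x z * 1 := by
            refine ENNReal.tsum_le_tsum fun z => ?_
            exact mul_le_mul_right (step_rowsum_le_one hp z) _
        _ ≤ 1 := by simpa using ih

lemma kpow_le_one [Fintype A] {E : Set (X × A × X)} {p : X × A × X → ℝ≥0∞} {α : ℝ}
    (hp : IsTransProb E p α) (n : ℕ) (x y : X) : kpow (step p) n x y ≤ 1 :=
  le_trans (ENNReal.le_tsum y) (kpow_rowsum_le_one hp n x)

lemma specRad_le_one [Fintype A] {E : Set (X × A × X)} {p : X × A × X → ℝ≥0∞} {α : ℝ}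
    (hp : IsTransProb E p α) (x y : X) : specRad (step p) x y ≤ 1 := by
  refine Filter.limsup_le_of_le (by isBoundedDefault) ?_
  filter_upwards with n
  exact ENNReal.rpow_le_one (kpow_le_one hp n x y) (by positivity)

/-- Along an edge, `α * h(target) ≤ ρ * h(source)`. -/
lemma edge_bound {E : Set (X × A × X)} {p : X × A × X → ℝ≥0∞} {α : ℝ}
    (hp : IsTransProb E p α) {ρ : ℝ≥0∞} {h : X → ℝ≥0∞}
    (hharm : ∀ x : X, (∑' y : X, step p x y * h y) = ρ * h x)
    {e : X × A × X} (he : e ∈ E) :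
    ENNReal.ofReal α * h e.2.2 ≤ ρ * h e.1 := by
  obtain ⟨x, a, z⟩ := e
  have h1 : ENNReal.ofReal α ≤ step p x z :=
    le_trans (hp.le_of_mem _ he) (ENNReal.le_tsum a)
  calc ENNReal.ofReal α * h z ≤ step p x z * h z := mul_le_mul_left h1 _
    _ ≤ ∑' y : X, step p x y * h y := ENNReal.le_tsum z
    _ = ρ * h x := hharm x

/-- Along a path of length `n` from `u` to `v`, `α^n * h v ≤ ρ^n * h u`. -/
lemma path_bound {E : Set (X × A × X)} {p : X × A × X → ℝ≥0∞} {α : ℝ}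
    (hp : IsTransProb E p α) {ρ : ℝ≥0∞} {h : X → ℝ≥0∞}
    (hharm : ∀ x : X, (∑' y : X, step p x y * h y) = ρ * h x) :
    ∀ (es : List (X × A × X)) (u v : X), IsPath E u v es →
      ENNReal.ofReal α ^ es.length * h v ≤ ρ ^ es.length * h u := by
  intro es
  induction es with
  | nil => intro u v huv; cases huv; simp
  | cons e tl ih =>
      rintro u v ⟨heE, he1, hpath⟩
      have h1 := ih e.2.2 v hpath
      have h2 := edge_bound hp hharm heE
      rw [he1] at h2
      calc ENNReal.ofReal α ^ (e :: tl).length * h v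
          = ρ ^ 0 * (ENNReal.ofReal α * (ENNReal.ofReal α ^ tl.length * h v)) := by
            simp [pow_succ]; ring
        _ ≤ ρ ^ 0 * (ENNReal.ofReal α * (ρ ^ tl.length * h e.2.2)) := by
            exact mul_le_mul_right (mul_le_mul_right h1 _) _
        _ = ρ ^ tl.length * (ENNReal.ofReal α * h e.2.2) := by ring
        _ ≤ ρ ^ tl.length * (ρ * h u) := mul_le_mul_right h2 _
        _ = ρ ^ (e :: tl).length * h u := by simp [pow_succ]; ring

end Aux

/-- For a uniformly connected labelled graph with constant `K`,
transition probabilities `p(e) ≥ α > 0` with row sums `≤ 1`, and `h > 0` a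
`ρ(P)`-harmonic function, one has `ρ(P) ≥ α`, and the `h`-transformed probabilities
satisfy `p^h(e) ≥ (α/ρ(P))^{K+1} > 0` for every edge `e`. -/
theorem statement6 {X A : Type*} [Infinite X] [Fintype A]
    (E : Set (X × A × X)) (K : ℕ) (hUC : UniformlyConnectedWith E K)
    (p : X × A × X → ℝ≥0∞) (α : ℝ) (hp : IsTransProb E p α)
    (ρ : ℝ≥0∞) (hρ : ∀ x y : X, specRad (step p) x y = ρ)
    (h : X → ℝ≥0∞) (hpos : ∀ x, h x ≠ 0) (hfin : ∀ x, h x ≠ ∞)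
    (hharm : ∀ x : X, (∑' y : X, step p x y * h y) = ρ * h x)
    (ph : X × A × X → ℝ≥0∞)
    (hph : ∀ e : X × A × X, ph e = p e * h e.2.2 / (ρ * h e.1)) :
    ENNReal.ofReal α ≤ ρ ∧
    (∀ e ∈ E, (ENNReal.ofReal α / ρ) ^ (K + 1) ≤ ph e) ∧
    0 < (ENNReal.ofReal α / ρ) ^ (K + 1) := by
  classical
  have hα0 : ENNReal.ofReal α ≠ 0 := (ENNReal.ofReal_pos.mpr hp.alpha_pos).ne'
  -- ρ ≤ 1
  obtain ⟨x0⟩ : Nonempty X := inferInstance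
  have hρle1 : ρ ≤ 1 := by
    rw [← hρ x0 x0]; exact specRad_le_one hp x0 x0
  have hρtop : ρ ≠ ∞ := ne_top_of_le_ne_top ENNReal.one_ne_top hρle1
  -- α ≤ ρ via a cycle
  have hαρ : ENNReal.ofReal α ≤ ρ := by
    obtain ⟨y0, hy0⟩ := exists_ne x0
    obtain ⟨es, hes⟩ := hUC.1 x0 y0
    cases es with
    | nil => exact absurd hes hy0.symm
    | cons e tl =>
        obtain ⟨heE, he1, -⟩ := hes
        obtain ⟨es', hes', -⟩ := hUC.2 e heE
        rw [he1] at hes'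
        have hcyc : IsPath E x0 x0 (e :: es') := ⟨heE, he1, hes'⟩
        have hb := path_bound hp hharm (e :: es') x0 x0 hcyc
        set m := (e :: es').length with hm
        have hpow : ENNReal.ofReal α ^ m ≤ ρ ^ m :=
          (ENNReal.mul_le_mul_iff_left (hpos x0) (hfin x0)).mp hb
        by_contra hlt
        push_neg at hlt
        exact absurd hpow (not_le.mpr (ENNReal.pow_lt_pow_left (by simp [hm]) hlt))
  have hρ0 : ρ ≠ 0 := fun h0 => hα0 (le_antisymm (h0 ▸ hαρ) zero_le)
  have hdivpos : 0 < (ENNReal.ofReal α / ρ) ^ (K + 1) := by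
    exact ENNReal.pow_pos (ENNReal.div_pos hα0 hρtop) _
  refine ⟨hαρ, ?_, hdivpos⟩
  intro e heE
  obtain ⟨es, hes, hlen⟩ := hUC.2 e heE
  set m := es.length with hm
  -- α^m * h e.1 ≤ ρ^m * h e.2.2
  have hb := path_bound hp hharm es e.2.2 e.1 hes
  rw [← hm] at hb
  have hedge : ENNReal.ofReal α ≤ p e := hp.le_of_mem e heE
  rw [hph e]
  have hdiv1 : ENNReal.ofReal α / ρ ≤ 1 := by
    rw [ENNReal.div_le_iff hρ0 hρtop, one_mul]; exact hαρ
  have hdiv_le : (ENNReal.ofReal α / ρ) ^ (K + 1) ≤ (ENNReal.ofReal α / ρ) ^ (m + 1) :=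
    pow_le_pow_of_le_one zero_le hdiv1 (by omega)
  refine le_trans hdiv_le ?_
  have hrw : (ENNReal.ofReal α / ρ) ^ (m + 1)
      = ENNReal.ofReal α ^ (m + 1) / ρ ^ (m + 1) := by
    simp [div_eq_mul_inv, mul_pow, ENNReal.inv_pow]
  rw [hrw, ENNReal.le_div_iff_mul_le (Or.inl (mul_ne_zero hρ0 (hpos e.1)))
    (Or.inl (ENNReal.mul_ne_top hρtop (hfin e.1))), div_eq_mul_inv, mul_right_comm, ← div_eq_mul_inv,
    ENNReal.div_le_iff (pow_ne_zero _ hρ0) (ENNReal.pow_ne_top hρtop)]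
  calc ENNReal.ofReal α ^ (m + 1) * (ρ * h e.1)
      = (ENNReal.ofReal α * ρ) * (ENNReal.ofReal α ^ m * h e.1) := by ring
    _ ≤ (ENNReal.ofReal α * ρ) * (ρ ^ m * h e.2.2) := mul_le_mul_right hb _
    _ = (ENNReal.ofReal α * h e.2.2) * ρ ^ (m + 1) := by ring
    _ ≤ p e * h e.2.2 * ρ ^ (m + 1) :=
        mul_le_mul_left (mul_le_mul_left hedge _) _
end

section
/- Let G be a connected simple graph with graph distance d, let o be a vertex, let r ≥ 1 be an integer, and let x,y be vertices with d(o,x) > r and d(o,y) > r. If d(o,x) + d(o,y) − d(x,y) > 2r, then x and y belong to the same connected component of the subgraph of G induced on {z : d(o,z) > r}; i.e., there is a walk from x to y in G all of whose vertices z satisfy d(o,z) > r. -/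
/-- In a connected graph, if `d(o,x) > r`, `d(o,y) > r` and
`d(o,x) + d(o,y) - d(x,y) > 2r`, then `x` and `y` lie in the same connected component of
the graph with the ball `B(o,r)` removed: there is a walk from `x` to `y` all of whose
vertices are at distance greater than `r` from `o`. -/
theorem statement13 {V : Type*} (G : SimpleGraph V) (hconn : G.Connected)
    (o x y : V) (r : ℕ) (hr : 1 ≤ r)
    (hx : r < G.dist o x) (hy : r < G.dist o y)
    (hxy : G.dist x y + 2 * r < G.dist o x + G.dist o y) :
    ∃ w : G.Walk x y, ∀ z ∈ w.support, r < G.dist o z := by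
  classical
  obtain ⟨p, hp⟩ := (hconn x y).exists_walk_length_eq_dist
  refine ⟨p, fun z hz => ?_⟩
  have h1 : G.dist x z ≤ (p.takeUntil z hz).length := SimpleGraph.dist_le _
  have h2 : G.dist z y ≤ (p.dropUntil z hz).length := SimpleGraph.dist_le _
  have hsum : (p.takeUntil z hz).length + (p.dropUntil z hz).length = p.length := by
    rw [← SimpleGraph.Walk.length_append, p.take_spec hz]
  have hzo : G.dist x z + G.dist z y ≤ G.dist x y := by omega
  have t1 : G.dist o x ≤ G.dist o z + G.dist z x := hconn.dist_triangle
  have t2 : G.dist o y ≤ G.dist o z + G.dist z y := hconn.dist_triangle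
  have e1 : G.dist z x = G.dist x z := SimpleGraph.dist_comm
  omega
end

section
/- Let G be a connected simple graph with graph distance d and a base vertex o, and let (x_n), (y_n) be sequences of vertices such that d(o,x_n) → ∞ and d(x_n,y_n)/d(o,x_n) → 0 as n → ∞. Then for every integer r ≥ 1 there is N such that for all n ≥ N, the vertices x_n and y_n lie in the same connected component of the subgraph induced on {z : d(o,z) > r}; i.e., x_n and y_n are joined by a walk all of whose vertices are at distance greater than r from o. (This expresses that the space of ends of G is a weakly projective boundary: if x_n converges to an end u and d(x_n,y_n)/d(o,x_n) → 0, then y_n converges to the same end u.) -/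
open Filter

/-- In a connected graph, if `d(o,xₙ) → ∞` and
`d(xₙ,yₙ)/d(o,xₙ) → 0`, then for every `r ≥ 1` the vertices `xₙ` and `yₙ` eventually lie
in the same connected component of the graph with the ball `B(o,r)` removed
(the space of ends is a weakly projective boundary). -/
theorem statement14 {V : Type*} (G : SimpleGraph V) (hconn : G.Connected) (o : V)
    (x y : ℕ → V)
    (hx : Tendsto (fun n => (G.dist o (x n) : ℝ)) atTop atTop)
    (hxy : Tendsto (fun n => (G.dist (x n) (y n) : ℝ) / (G.dist o (x n) : ℝ))
      atTop (nhds 0)) :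
    ∀ r : ℕ, 1 ≤ r → ∃ N : ℕ, ∀ n ≥ N,
      ∃ w : G.Walk (x n) (y n), ∀ z ∈ w.support, r < G.dist o z := by
  intro r hr
  have h1 : ∀ᶠ n in atTop, (2 * r : ℝ) < (G.dist o (x n) : ℝ) :=
    hx.eventually_gt_atTop _
  have h2 : ∀ᶠ n in atTop,
      (G.dist (x n) (y n) : ℝ) / (G.dist o (x n) : ℝ) < 1 / 2 :=
    hxy.eventually_lt_const (by norm_num)
  obtain ⟨N, hN⟩ := eventually_atTop.1 (h1.and h2)
  refine ⟨N, fun n hn => ?_⟩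
  obtain ⟨hD, hrat⟩ := hN n hn
  set D := G.dist o (x n) with hDdef
  set d := G.dist (x n) (y n) with hddef
  have hDpos : (0 : ℝ) < (D : ℝ) := by
    have : (0 : ℝ) ≤ 2 * r := by positivity
    linarith
  have hdlt : 2 * d < D := by
    have : (d : ℝ) < (D : ℝ) / 2 := by
      rw [div_lt_div_iff₀ hDpos (by norm_num)] at hrat
      linarith
    have : (2 * d : ℝ) < (D : ℝ) := by push_cast; linarith
    exact_mod_cast this
  have hDr : 2 * r < D := by exact_mod_cast hD
  classical
  obtain ⟨w, hw⟩ := hconn.exists_walk_length_eq_dist (x n) (y n)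
  refine ⟨w, fun z hz => ?_⟩
  have hxz : G.dist (x n) z ≤ d := by
    calc G.dist (x n) z ≤ (w.takeUntil z hz).length := SimpleGraph.dist_le _
    _ ≤ w.length := SimpleGraph.Walk.length_takeUntil_le w hz
    _ = d := hw
  have htri : D ≤ G.dist o z + G.dist z (x n) :=
    SimpleGraph.Connected.dist_triangle hconn
  have hcomm : G.dist z (x n) = G.dist (x n) z := SimpleGraph.dist_comm
  omega
end
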